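/- arXiv:2006.01560 — 11 statements merged into one kernel-verified Lean document; each statement's English description precedes it below -/
import Mathlib

section
/- If T is a bounded positive linear operator on a Banach lattice with operator norm at most 1 (a substochastic operator) and Ker(I - T) = {0}, then 1 belongs to the resolvent set of T if and only if the spectral radius of T is strictly less than 1. -/
/-!
Since `T ≥ 0` and `‖T‖ ≤ 1`, the inverse `S = (1 - T)⁻¹` is the limit of the positive Neumann
series `∑ tⁿ Tⁿ` as `t → 1⁻`, hence positive. The lattice inequality `|x| - T|x| ≤ |x + T x|`
then gives `|x| ≤ S |x + T x|`, so `1 + T` is bounded below by `‖S‖⁻¹`; being close to the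
invertible operator `(1 + δ) + T`, it is invertible. Thus neither `1` nor `-1` lies in the
(compact) real spectrum, which is contained in `[-1, 1]`, so the spectral radius is `< 1`.
-/

open Filter Topology

section LatticeOrderedGroup

variable {X F : Type*} [AddCommGroup X] [Lattice X] [FunLike F X X] [AddMonoidHomClass F X X]

lemma abs_apply_le_apply_abs {f : F} (hf : Monotone f) (x : X) : |f x| ≤ f |x| :=
  abs_le'.mpr ⟨hf (le_abs_self x), by simpa only [map_neg] using hf (neg_le_abs x)⟩

variable [IsOrderedAddMonoid X]

lemma monotone_of_map_nonneg {f : F} (hf : ∀ x : X, 0 ≤ x → 0 ≤ f x) : Monotone f :=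
  fun x y hxy ↦ sub_nonneg.mp <| by simpa only [map_sub] using hf (y - x) (sub_nonneg.mpr hxy)

lemma nonneg_of_two_pow_nsmul_nonneg {z : X} : ∀ k : ℕ, 0 ≤ 2 ^ k • z → 0 ≤ z
  | 0, h => by simpa using h
  | k + 1, h => nsmul_two_semiclosed <|
      nonneg_of_two_pow_nsmul_nonneg k <| by rwa [← mul_nsmul', ← pow_succ]

lemma abs_sub_apply_abs_le_abs_add_apply {f : F} (hf : Monotone f) (x : X) :
    |x| - f |x| ≤ |x + f x| := by
  have hx : |x| ≤ |x + f x| + |f x| := by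
    simpa only [add_neg_cancel_right, abs_neg] using abs_add_le (x + f x) (-f x)
  exact sub_le_iff_le_add.mpr <| hx.trans <| add_le_add_right (abs_apply_le_apply_abs hf x) _

end LatticeOrderedGroup

lemma ContinuousLinearMap.monotone_pow {R M : Type*} [Semiring R] [TopologicalSpace M]
    [AddCommMonoid M] [Module R M] [Preorder M] {T : M →L[R] M} (hT : Monotone T) (n : ℕ) :
    Monotone ⇑(T ^ n) := by
  rw [← ContinuousLinearMap.coe_coe, ContinuousLinearMap.toLinearMap_pow, Module.End.coe_pow]
  exact hT.iterate n

section Operators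

variable {𝕜 E : Type*} [NontriviallyNormedField 𝕜] [NormedAddCommGroup E] [NormedSpace 𝕜 E]

lemma norm_mul_norm_one_le_one {T : E →L[𝕜] E} (hT : ‖T‖ ≤ 1) : ‖T‖ * ‖(1 : E →L[𝕜] E)‖ ≤ 1 :=
  mul_le_one₀ hT (norm_nonneg _) ContinuousLinearMap.norm_id_le

lemma opNorm_inverse_le_of_norm_le_mul {B : (E →L[𝕜] E)ˣ} {K : ℝ} (hK : 0 ≤ K)
    (hB : ∀ x, ‖x‖ ≤ K * ‖(B : E →L[𝕜] E) x‖) : ‖((B⁻¹ : (E →L[𝕜] E)ˣ) : E →L[𝕜] E)‖ ≤ K :=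
  ContinuousLinearMap.opNorm_le_bound _ hK fun y ↦ by
    have hy : (B : E →L[𝕜] E) (((B⁻¹ : (E →L[𝕜] E)ˣ) : E →L[𝕜] E) y) = y := congr($(B.mul_inv) y)
    simpa only [hy] using hB (((B⁻¹ : (E →L[𝕜] E)ˣ) : E →L[𝕜] E) y)

lemma isUnit_of_norm_le_mul_of_isUnit [CompleteSpace E] {A B : E →L[𝕜] E} {K : ℝ} (hK : 0 ≤ K)
    (hA : ∀ x, ‖x‖ ≤ K * ‖A x‖) (hB : IsUnit B) (hAB : 2 * K * ‖B - A‖ < 1) : IsUnit A := by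
  obtain ⟨B, rfl⟩ := hB
  set δ := ‖(B : E →L[𝕜] E) - A‖
  have hBbelow : ∀ x, ‖x‖ ≤ 2 * K * ‖(B : E →L[𝕜] E) x‖ := fun x ↦ by
    have hAx : ‖A x‖ ≤ ‖(B : E →L[𝕜] E) x‖ + δ * ‖x‖ :=
      calc ‖A x‖ = ‖(B : E →L[𝕜] E) x - ((B : E →L[𝕜] E) - A) x‖ := by simp
        _ ≤ ‖(B : E →L[𝕜] E) x‖ + δ * ‖x‖ :=
          (norm_sub_le _ _).trans (by gcongr; exact ContinuousLinearMap.le_opNorm _ _)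
    nlinarith [hA x, mul_le_mul_of_nonneg_left hAx hK,
      mul_le_mul_of_nonneg_right hAB.le (norm_nonneg x)]
  have hsmall : ‖((B⁻¹ : (E →L[𝕜] E)ˣ) : E →L[𝕜] E) * ((B : E →L[𝕜] E) - A)‖ < 1 :=
    calc _ ≤ 2 * K * δ := (norm_mul_le _ _).trans <| mul_le_mul_of_nonneg_right
            (opNorm_inverse_le_of_norm_le_mul (by positivity) hBbelow) (norm_nonneg _)
      _ < 1 := hAB
  have hfactor : A = B * (1 - ((B⁻¹ : (E →L[𝕜] E)ˣ) : E →L[𝕜] E) * ((B : E →L[𝕜] E) - A)) := by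
    rw [mul_sub, mul_one, ← mul_assoc, Units.mul_inv, one_mul, sub_sub_cancel]
  rw [hfactor]
  exact B.isUnit.mul (Units.oneSub _ hsmall).isUnit

end Operators

lemma spectralRadius_lt_one_of_isUnit_one_sub_of_isUnit_one_add {A : Type*} [NormedRing A]
    [NormedAlgebra ℝ A] [CompleteSpace A] {a : A} (ha : ‖a‖ * ‖(1 : A)‖ ≤ 1)
    (h₁ : IsUnit (1 - a)) (h₂ : IsUnit (1 + a)) : spectralRadius ℝ a < 1 := by
  rcases (spectrum ℝ a).eq_empty_or_nonempty with hσ | hσ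
  · simp [spectralRadius, hσ]
  refine spectrum.spectralRadius_lt_of_forall_lt_of_nonempty hσ fun k hk ↦ ?_
  have hk₁ : k ≠ 1 := by
    rintro rfl
    exact spectrum.mem_iff.mp hk (by rwa [map_one])
  have hk₂ : k ≠ -1 := by
    rintro rfl
    exact spectrum.mem_iff.mp hk (by rw [map_neg, map_one, ← neg_add']; exact h₂.neg)
  have hle : |k| ≤ 1 := (spectrum.norm_le_norm_mul_of_mem hk).trans ha
  have hlt : |k| < 1 := hle.lt_of_ne fun h ↦ (abs_eq zero_le_one).mp h |>.elim hk₁ hk₂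
  rw [← NNReal.coe_lt_coe, coe_nnnorm, Real.norm_eq_abs, NNReal.coe_one]
  exact hlt

section NormedLattice

variable {X : Type*} [NormedAddCommGroup X] [Lattice X] [HasSolidNorm X] [IsOrderedAddMonoid X]
  [NormedSpace ℝ X]

/-- No class assumption links the order to the `ℝ`-action; compatibility comes from halving
(`nsmul_two_semiclosed`), dyadic approximation and the closedness of the positive cone. -/
instance HasSolidNorm.posSMulMono_real : PosSMulMono ℝ X := by
  refine PosSMulMono.of_smul_nonneg fun t ht y hy ↦ ?_
  set d : ℕ → ℝ := fun k ↦ ⌊t * 2 ^ k⌋₊ / 2 ^ k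
  have hd : Tendsto d atTop (𝓝 t) :=
    (tendsto_nat_floor_mul_div_atTop ht).comp (tendsto_pow_atTop_atTop_of_one_lt one_lt_two)
  have hdy : ∀ k, 0 ≤ d k • y := fun k ↦ by
    refine nonneg_of_two_pow_nsmul_nonneg k ?_
    have hk : (2 : ℝ) ^ k ≠ 0 := by positivity
    rw [← Nat.cast_smul_eq_nsmul ℝ, smul_smul, Nat.cast_pow, Nat.cast_ofNat,
      mul_div_cancel₀ _ hk, Nat.cast_smul_eq_nsmul]
    exact nsmul_nonneg hy _
  exact ge_of_tendsto (hd.smul_const y) (Eventually.of_forall hdy)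

lemma norm_le_opNorm_mul_norm_add_apply {T S : X →L[ℝ] X} (hT : Monotone T) (hS : Monotone S)
    (hST : S * (1 - T) = 1) (x : X) : ‖x‖ ≤ ‖S‖ * ‖x + T x‖ := by
  have hSabs : S (|x| - T |x|) = |x| := by
    simpa using congrArg (· |x|) hST
  have habs : |x| ≤ S |x + T x| := hSabs ▸ hS (abs_sub_apply_abs_le_abs_add_apply hT x)
  calc ‖x‖ ≤ ‖S |x + T x|‖ := by
        refine norm_le_norm_of_abs_le_abs ?_
        rwa [abs_of_nonneg ((abs_nonneg x).trans habs)]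
    _ ≤ ‖S‖ * ‖x + T x‖ := by simpa only [norm_abs_eq_norm] using S.le_opNorm |x + T x|

variable [CompleteSpace X] {T : X →L[ℝ] X}

lemma monotone_inverse_one_sub_of_norm_lt_one (hT : Monotone T) (hnorm : ‖T‖ < 1) :
    Monotone ⇑(Ring.inverse (1 - T)) := by
  refine monotone_of_map_nonneg fun x hx ↦ ?_
  have hsum := (ContinuousLinearMap.apply ℝ X x).map_tsum (summable_geometric_of_norm_lt_one hnorm)
  simp only [ContinuousLinearMap.apply_apply] at hsum
  rw [← geom_series_eq_inverse T hnorm, hsum]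
  exact tsum_nonneg fun n ↦ by simpa using ContinuousLinearMap.monotone_pow hT n hx

lemma monotone_inverse_one_sub (hT : Monotone T) (hnorm : ‖T‖ ≤ 1) (hu : IsUnit (1 - T)) :
    Monotone ⇑(Ring.inverse (1 - T)) := by
  refine monotone_of_map_nonneg fun x hx ↦ ?_
  have hlim : Tendsto (fun t : ℝ ↦ Ring.inverse (1 - t • T)) (𝓝[<] 1)
      (𝓝 (Ring.inverse (1 - T))) := by
    have hcont : ContinuousAt Ring.inverse (1 - T) :=
      hu.unit_spec ▸ NormedRing.inverse_continuousAt hu.unit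
    refine (hcont.tendsto.comp ?_).mono_left nhdsWithin_le_nhds
    exact (by fun_prop : Continuous fun t : ℝ ↦ (1 : X →L[ℝ] X) - t • T).tendsto' 1 _ (by simp)
  refine ge_of_tendsto
    ((ContinuousLinearMap.apply ℝ X x).continuous.continuousAt.tendsto.comp hlim) ?_
  filter_upwards [Ioo_mem_nhdsLT zero_lt_one] with t ⟨ht0, ht1⟩
  have htT : ‖t • T‖ < 1 := by
    rw [norm_smul, Real.norm_of_nonneg ht0.le]
    nlinarith [norm_nonneg T]
  have hmono : Monotone ⇑(t • T) := fun y z hyz ↦ smul_le_smul_of_nonneg_left (hT hyz) ht0.le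
  simpa using monotone_inverse_one_sub_of_norm_lt_one hmono htT hx

lemma isUnit_one_add_of_monotone (hT : Monotone T) (hnorm : ‖T‖ ≤ 1) (hu : IsUnit (1 - T)) :
    IsUnit (1 + T) := by
  set K := ‖Ring.inverse (1 - T)‖
  have hbelow : ∀ x, ‖x‖ ≤ K * ‖(1 + T) x‖ := by
    simpa using norm_le_opNorm_mul_norm_add_apply hT (monotone_inverse_one_sub hT hnorm hu)
      (Ring.inverse_mul_cancel _ hu)
  set δ : ℝ := (2 * (K + 1))⁻¹
  have hδ : 0 < δ := by positivity
  have hB : IsUnit ((1 + δ) • (1 : X →L[ℝ] X) + T) := by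
    have hres : -(1 + δ) ∈ resolventSet ℝ T := spectrum.mem_resolventSet_of_norm_lt_mul <|
      (norm_mul_norm_one_le_one hnorm).trans_lt <| by
        rw [norm_neg, Real.norm_of_nonneg (by positivity)]
        linarith
    rwa [spectrum.mem_resolventSet_iff, Algebra.algebraMap_eq_smul_one, neg_smul, ← neg_add',
      IsUnit.neg_iff] at hres
  refine isUnit_of_norm_le_mul_of_isUnit (norm_nonneg _) hbelow hB ?_
  calc 2 * K * ‖(1 + δ) • (1 : X →L[ℝ] X) + T - (1 + T)‖ ≤ 2 * K * δ := by
        gcongr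
        rw [add_smul, one_smul, add_sub_add_right_eq_sub, add_sub_cancel_left]
        refine (norm_smul_le _ _).trans ?_
        rw [Real.norm_of_nonneg hδ.le]
        exact mul_le_of_le_one_right hδ.le ContinuousLinearMap.norm_id_le
    _ < 1 := by
        rw [mul_inv_lt_iff₀ (by positivity)]
        linarith [norm_nonneg (Ring.inverse (1 - T))]

end NormedLattice

theorem stmt_0_general {X : Type*} [NormedAddCommGroup X] [Lattice X] [HasSolidNorm X] [IsOrderedAddMonoid X] [NormedSpace ℝ X] [CompleteSpace X]
    (T : X →L[ℝ] X) (hpos : ∀ u : X, 0 ≤ u → 0 ≤ T u) (hnorm : ‖T‖ ≤ 1) :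
    (1 : ℝ) ∈ resolventSet ℝ T ↔ spectralRadius ℝ T < 1 := by
  refine ⟨fun h ↦ ?_, fun h ↦ spectrum.mem_resolventSet_of_spectralRadius_lt (by simpa using h)⟩
  have hu : IsUnit (1 - T) := by rwa [spectrum.mem_resolventSet_iff, map_one] at h
  exact spectralRadius_lt_one_of_isUnit_one_sub_of_isUnit_one_add (norm_mul_norm_one_le_one hnorm)
    hu (isUnit_one_add_of_monotone (monotone_of_map_nonneg hpos) hnorm hu)

/-- For a substochastic operator `T` on a Banach lattice with trivial fixed space of `I - T`,
`1` is in the resolvent set of `T` iff the spectral radius of `T` is strictly less than `1`. -/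
theorem stmt_0 {X : Type*} [NormedAddCommGroup X] [Lattice X] [HasSolidNorm X] [IsOrderedAddMonoid X] [NormedSpace ℝ X] [CompleteSpace X]
    (T : X →L[ℝ] X) (hpos : ∀ u : X, 0 ≤ u → 0 ≤ T u) (hnorm : ‖T‖ ≤ 1)
    (hker : ∀ u : X, T u = u → u = 0) :
    (1 : ℝ) ∈ resolventSet ℝ T ↔ spectralRadius ℝ T < 1 :=
  stmt_0_general T hpos hnorm
end

section
/- Let T be a bounded linear operator on a Banach space with ‖T‖ ≤ 1. If there exist a compact operator K and n ∈ ℕ such that ‖T^n − K‖ < 1 (T is quasi-compact) and Ker(I − T) = {0}, then 1 belongs to the resolvent set of T. -/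
/-!
Write `S = 1 - T`. Since `(∑ i < n, T ^ i) S = 1 - T ^ n = (1 - (T ^ n - K)) - K` and
`1 - (T ^ n - K)` is invertible, the compactness of `K` shows that every sequence of unit vectors
`v k` with `S v k → 0` has a convergent subsequence; its limit is a unit vector in `ker S = 0`,
so no such sequence exists and `S` is bounded below, hence has closed range. For `y` in `X`, the
Cesàro means `w N` of the orbit `T ^ m y` satisfy `S (w N) = (y - T ^ (N + 1) y) / (N + 1) → 0`,
so `w N → 0`, while `y - w N ∈ range S`; thus `y ∈ range S`.
-/

open Filter Topology

open Finset Function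

section NontriviallyNormedField

variable {𝕜 E : Type*} [NontriviallyNormedField 𝕜] [NormedAddCommGroup E] [NormedSpace 𝕜 E]

theorem ContinuousLinearMap.norm_pow_le_one {T : E →L[𝕜] E} (hT : ‖T‖ ≤ 1) (n : ℕ) :
    ‖T ^ n‖ ≤ 1 := by
  cases n with
  | zero => exact norm_id_le
  | succ n => exact (norm_pow_le' T n.succ_pos).trans (pow_le_one₀ (norm_nonneg T) hT)

variable [CompleteSpace E]

theorem IsCompactOperator.tendsto_subseq_of_norm_sub_lt_one {P K : E →L[𝕜] E}
    (hK : IsCompactOperator K) (hPK : ‖P - K‖ < 1) {v : ℕ → E} {r : ℝ} (hv : ∀ k, ‖v k‖ ≤ r)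
    (hPv : Tendsto (fun k ↦ (1 - P) (v k)) atTop (𝓝 0)) :
    ∃ x, ∃ φ : ℕ → ℕ, StrictMono φ ∧ Tendsto (v ∘ φ) atTop (𝓝 x) := by
  obtain ⟨C, hC, hKC⟩ := hK.image_closedBall_subset_compact (𝕜₁ := 𝕜) r
  obtain ⟨z, -, φ, hφ, hKv⟩ :=
    hC.tendsto_subseq fun k ↦ hKC ⟨v k, by simpa using hv k, rfl⟩
  set A := Units.oneSub (P - K) hPK
  have hAv : Tendsto (fun k ↦ (A : E →L[𝕜] E) (v (φ k))) atTop (𝓝 z) := by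
    have hsum := (hPv.comp hφ.tendsto_atTop).add hKv
    rw [zero_add] at hsum
    refine hsum.congr fun k ↦ ?_
    simp [A, sub_add]
  refine ⟨(↑A⁻¹ : E →L[𝕜] E) z, φ, hφ, ?_⟩
  refine (((↑A⁻¹ : E →L[𝕜] E).continuous.tendsto z).comp hAv).congr fun k ↦ ?_
  simp [← mul_apply_eq_comp]

end NontriviallyNormedField

section RCLike

variable {𝕜 E F : Type*} [RCLike 𝕜] [NormedAddCommGroup E] [NormedSpace 𝕜 E]
  [NormedAddCommGroup F] [NormedSpace 𝕜 F]

theorem ContinuousLinearMap.exists_antilipschitzWith_of_tendsto_subseq {S : E →L[𝕜] F}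
    (hS : Injective S)
    (hseq : ∀ v : ℕ → E, (∀ k, ‖v k‖ = 1) → Tendsto (fun k ↦ S (v k)) atTop (𝓝 0) →
      ∃ x, ∃ φ : ℕ → ℕ, StrictMono φ ∧ Tendsto (v ∘ φ) atTop (𝓝 x)) :
    ∃ K, AntilipschitzWith K S := by
  by_contra! h
  have hsmall : ∀ k : ℕ, ∃ x : E, ‖x‖ = 1 ∧ (k + 1) * ‖S x‖ < 1 := by
    intro k
    by_contra! hk
    exact h (k + 1) (antilipschitz_of_bound_of_norm_one S (by exact_mod_cast hk))
  choose v hv1 hvS using hsmall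
  have hSv : Tendsto (fun k ↦ S (v k)) atTop (𝓝 0) := by
    refine squeeze_zero_norm (fun k ↦ ?_) tendsto_one_div_add_atTop_nhds_zero_nat
    rw [le_div_iff₀' (by positivity)]
    exact (hvS k).le
  obtain ⟨x, φ, hφ, hx⟩ := hseq v hv1 hSv
  have hx1 : ‖x‖ = 1 := tendsto_nhds_unique hx.norm (by simp [hv1])
  have hSx : S x = 0 :=
    tendsto_nhds_unique ((S.continuous.tendsto x).comp hx) (hSv.comp hφ.tendsto_atTop)
  rw [hS (hSx.trans S.map_zero.symm), norm_zero] at hx1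
  exact zero_ne_one hx1

variable [CompleteSpace E]

theorem IsCompactOperator.exists_antilipschitzWith_one_sub {T K : E →L[𝕜] E} {n : ℕ}
    (hK : IsCompactOperator K) (hTK : ‖T ^ n - K‖ < 1) (hinj : Injective (1 - T : E →L[𝕜] E)) :
    ∃ C, AntilipschitzWith C (1 - T : E →L[𝕜] E) := by
  refine (1 - T).exists_antilipschitzWith_of_tendsto_subseq hinj fun v hv hSv ↦
    hK.tendsto_subseq_of_norm_sub_lt_one hTK (fun k ↦ (hv k).le) ?_
  have hgeom := ((∑ i ∈ range n, T ^ i).continuous.tendsto 0).comp hSv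
  rw [map_zero] at hgeom
  refine hgeom.congr fun k ↦ ?_
  rw [Function.comp_apply, ← mul_apply_eq_comp, geom_sum_mul_neg]

theorem ContinuousLinearMap.surjective_one_sub_of_antilipschitzWith {T : E →L[𝕜] E} {C : ℝ}
    {K : NNReal} (hT : ∀ n, ‖T ^ n‖ ≤ C) (hS : AntilipschitzWith K (1 - T : E →L[𝕜] E)) :
    Surjective (1 - T : E →L[𝕜] E) := by
  set S : E →L[𝕜] E := 1 - T
  intro y
  have hgeom : ∀ m, S ((∑ j ∈ range m, T ^ j) y) = y - (T ^ m) y := fun m ↦ by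
    rw [← mul_apply_eq_comp, mul_neg_geom_sum, sub_apply, one_apply_eq_self]
  set w : ℕ → E := fun N ↦ ((N : 𝕜) + 1)⁻¹ • (∑ m ∈ range (N + 1), T ^ m) y
  have hmem : ∀ N, y - w N ∈ Set.range S := fun N ↦ by
    refine ⟨((N : 𝕜) + 1)⁻¹ • ∑ m ∈ range (N + 1), (∑ j ∈ range m, T ^ j) y, ?_⟩
    have hN : ((N : 𝕜) + 1) ≠ 0 := by exact_mod_cast N.succ_ne_zero
    rw [map_smul, map_sum]
    simp only [hgeom]
    rw [sum_sub_distrib, sum_const, card_range, smul_sub, ← Nat.cast_smul_eq_nsmul 𝕜, smul_smul,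
      Nat.cast_succ, inv_mul_cancel₀ hN, one_smul]
    simp only [w, _root_.sum_apply]
  have hSw : ∀ N, ‖S (w N)‖ ≤ ((N : ℝ) + 1)⁻¹ * ((1 + C) * ‖y‖) := fun N ↦ by
    rw [map_smul, hgeom, norm_smul, norm_inv, ← Nat.cast_succ, RCLike.norm_natCast, Nat.cast_succ]
    gcongr
    calc ‖y - (T ^ (N + 1)) y‖ ≤ ‖y‖ + ‖T ^ (N + 1)‖ * ‖y‖ :=
          (norm_sub_le _ _).trans (by gcongr; exact le_opNorm _ _)
      _ ≤ (1 + C) * ‖y‖ := by rw [add_mul, one_mul]; gcongr; exact hT _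
  have hw : Tendsto w atTop (𝓝 0) := by
    rw [(hS.isUniformEmbedding S.uniformContinuous).isEmbedding.tendsto_nhds_iff, comp_def,
      map_zero]
    refine squeeze_zero_norm hSw ?_
    simpa using (tendsto_one_div_add_atTop_nhds_zero_nat (𝕜 := ℝ)).mul_const ((1 + C) * ‖y‖)
  have hy : y ∈ closure (Set.range S) :=
    mem_closure_of_tendsto (by simpa using tendsto_const_nhds.sub hw) (Eventually.of_forall hmem)
  rwa [(hS.isClosed_range S.uniformContinuous).closure_eq] at hy

end RCLike

/-- A quasi-compact linear contraction `T` with trivial kernel of `I - T` has `1` in its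
resolvent set. -/
theorem stmt_2 {X : Type*} [NormedAddCommGroup X] [NormedSpace ℝ X] [CompleteSpace X]
    (T : X →L[ℝ] X) (hnorm : ‖T‖ ≤ 1)
    (hqc : ∃ (K : X →L[ℝ] X) (n : ℕ), IsCompactOperator K ∧ ‖T ^ n - K‖ < 1)
    (hker : ∀ u : X, T u = u → u = 0) :
    (1 : ℝ) ∈ resolventSet ℝ T := by
  obtain ⟨K, n, hK, hTK⟩ := hqc
  have hinj : Injective (1 - T : X →L[ℝ] X) :=
    (injective_iff_map_eq_zero _).2 fun u hu ↦ hker u (sub_eq_zero.1 hu).symm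
  obtain ⟨C, hC⟩ := hK.exists_antilipschitzWith_one_sub hTK hinj
  have hsurj := ContinuousLinearMap.surjective_one_sub_of_antilipschitzWith
    (ContinuousLinearMap.norm_pow_le_one hnorm) hC
  rw [spectrum.mem_resolventSet_iff, map_one]
  exact ContinuousLinearMap.isUnit_iff_bijective.2 ⟨hinj, hsurj⟩
end

section
/- Let X be a Banach lattice whose norm is additive on the positive cone (an AL space). Then there exists a unique positive linear functional α on X such that α(u) = ‖u‖ for every u in the positive cone. -/
/-! Every `x` splits as `x⁺ - x⁻`, so a positive functional equal to the norm on the cone must be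
`x ↦ ‖x⁺‖ - ‖x⁻‖`; this gives uniqueness. Conversely this map is additive because the two sides of
`(x + y)⁺ + x⁻ + y⁻ = (x + y)⁻ + x⁺ + y⁺` are sums of positive elements, on which the norm is
additive, and it is bounded by `‖x⁺‖ + ‖x⁻‖ = ‖|x|‖ = ‖x‖`, hence continuous and `ℝ`-linear. -/

section ALSpace

variable {X : Type*} [NormedAddCommGroup X] [Lattice X] [IsOrderedAddMonoid X]

theorem map_eq_norm_posPart_sub_norm_negPart {F : Type*} [FunLike F X ℝ]
    [AddMonoidHomClass F X ℝ] (φ : F) (hφ : ∀ u : X, 0 ≤ u → φ u = ‖u‖) (x : X) :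
    φ x = ‖x⁺‖ - ‖x⁻‖ := by
  conv_lhs => rw [← posPart_sub_negPart x]
  rw [map_sub, hφ _ (posPart_nonneg x), hφ _ (negPart_nonneg x)]

variable (hadd : ∀ u v : X, 0 ≤ u → 0 ≤ v → ‖u + v‖ = ‖u‖ + ‖v‖)
include hadd

theorem norm_posPart_sub_norm_negPart_add (x y : X) :
    ‖(x + y)⁺‖ - ‖(x + y)⁻‖ = (‖x⁺‖ - ‖x⁻‖) + (‖y⁺‖ - ‖y⁻‖) := by
  have hposPart : ∀ a : X, a⁺ = a + a⁻ := fun a => sub_eq_iff_eq_add.mp (posPart_sub_negPart a)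
  have hsplit : (x + y)⁺ + (x⁻ + y⁻) = (x + y)⁻ + (x⁺ + y⁺) := by
    rw [hposPart (x + y), hposPart x, hposPart y]; abel
  have hnorm := congrArg norm hsplit
  rw [hadd _ _ (posPart_nonneg _) (add_nonneg (negPart_nonneg _) (negPart_nonneg _)),
    hadd _ _ (negPart_nonneg _) (negPart_nonneg _),
    hadd _ _ (negPart_nonneg _) (add_nonneg (posPart_nonneg _) (posPart_nonneg _)),
    hadd _ _ (posPart_nonneg _) (posPart_nonneg _)] at hnorm
  linarith

theorem norm_posPart_add_norm_negPart [HasSolidNorm X] (x : X) : ‖x⁺‖ + ‖x⁻‖ = ‖x‖ := by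
  rw [← hadd _ _ (posPart_nonneg x) (negPart_nonneg x), posPart_add_negPart, norm_abs_eq_norm]

theorem abs_norm_posPart_sub_norm_negPart_le [HasSolidNorm X] (x : X) :
    |‖x⁺‖ - ‖x⁻‖| ≤ ‖x‖ := by
  have hsum := norm_posPart_add_norm_negPart hadd x
  rw [abs_le]
  constructor <;> linarith [norm_nonneg x⁺, norm_nonneg x⁻]

def normFunctionalHom : X →+ ℝ :=
  AddMonoidHom.mk' (fun x => ‖x⁺‖ - ‖x⁻‖) (norm_posPart_sub_norm_negPart_add hadd)

variable [HasSolidNorm X] [NormedSpace ℝ X]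

def normFunctional : X →L[ℝ] ℝ :=
  have hcont : Continuous (normFunctionalHom hadd) :=
    (AddMonoidHomClass.lipschitz_of_bound (normFunctionalHom hadd) 1 fun x => by
      rw [Real.norm_eq_abs, one_mul]
      exact abs_norm_posPart_sub_norm_negPart_le hadd x).continuous
  ⟨(normFunctionalHom hadd).toRealLinearMap hcont, hcont⟩

theorem normFunctional_apply_of_nonneg {u : X} (hu : 0 ≤ u) : normFunctional hadd u = ‖u‖ := by
  change ‖u⁺‖ - ‖u⁻‖ = ‖u‖
  rw [posPart_eq_self.mpr hu, negPart_eq_zero.mpr hu, norm_zero, sub_zero]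

end ALSpace

theorem stmt_3_general {X : Type*} [NormedAddCommGroup X] [Lattice X] [HasSolidNorm X]
    [IsOrderedAddMonoid X] [NormedSpace ℝ X]
    (hadd : ∀ u v : X, 0 ≤ u → 0 ≤ v → ‖u + v‖ = ‖u‖ + ‖v‖) :
    ∃! α : X →L[ℝ] ℝ,
      (∀ u : X, 0 ≤ u → 0 ≤ α u) ∧ (∀ u : X, 0 ≤ u → α u = ‖u‖) := by
  refine ⟨normFunctional hadd,
    ⟨fun u hu => ?_, fun u hu => normFunctional_apply_of_nonneg hadd hu⟩, ?_⟩
  · rw [normFunctional_apply_of_nonneg hadd hu]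
    exact norm_nonneg u
  rintro β ⟨-, hβ⟩
  ext x
  rw [map_eq_norm_posPart_sub_norm_negPart β hβ, map_eq_norm_posPart_sub_norm_negPart
    (normFunctional hadd) fun u hu => normFunctional_apply_of_nonneg hadd hu]

/-- On an AL space (Banach lattice with norm additive on the positive cone) there is a unique
positive continuous linear functional `α` with `α u = ‖u‖` on the positive cone. -/
theorem stmt_3 {X : Type*} [NormedAddCommGroup X] [Lattice X] [HasSolidNorm X]
    [IsOrderedAddMonoid X] [NormedSpace ℝ X] [CompleteSpace X]
    (hadd : ∀ u v : X, 0 ≤ u → 0 ≤ v → ‖u + v‖ = ‖u‖ + ‖v‖) :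
    ∃! α : X →L[ℝ] ℝ,
      (∀ u : X, 0 ≤ u → 0 ≤ α u) ∧ (∀ u : X, 0 ≤ u → α u = ‖u‖) :=
  stmt_3_general hadd
end

section
/- Let X be an AL space, T : X → X a substochastic operator with Ker(I − T) = {0}, and suppose there exists a quasi-interior element u > 0 (i.e., a positive element whose order ideal is dense) with T u ≤ u. Then for every v ∈ X the Cesàro averages (1/N) Σ_{n=0}^{N−1} T^n v converge to 0. -/
/-!
Since `T` is positive and `T u ≤ u`, the orbit `Tⁿ u` is a decreasing sequence of positive
elements. The norm of an AL space is additive on positive elements, so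
`‖Tᵐ u - Tⁿ u‖ = ‖Tᵐ u‖ - ‖Tⁿ u‖` for `m ≤ n` and the orbit is Cauchy because its norms
converge. Its limit is a fixed point of `T`, hence `0`. If `|v| ≤ c • u`, then
`|Tⁿ v| ≤ c • Tⁿ u`, so by solidity `Tⁿ v → 0` on the order ideal of `u`. The powers of the
contraction `T` are equicontinuous, so `Tⁿ v → 0` on the closure of that ideal, which is
everything, and Cesàro means of a null sequence are null.
-/

open Filter Topology

theorem abs_map_le_map_abs {α β F : Type*} [AddCommGroup α] [Lattice α]
    [AddCommGroup β] [Lattice β] [FunLike F α β] [AddMonoidHomClass F α β]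
    {f : F} (hf : Monotone f) (a : α) : |f a| ≤ f |a| :=
  abs_le'.2 ⟨hf (le_abs_self a), by rw [← map_neg]; exact hf (neg_le_abs a)⟩

section SolidNorm

variable {X F : Type*} [NormedAddCommGroup X] [Lattice X] [HasSolidNorm X] [IsOrderedAddMonoid X]
  [NormedSpace ℝ X] [FunLike F X X] [LinearMapClass F ℝ X X]

theorem norm_map_le_of_abs_le_smul {S : F} (hS : Monotone S) {u v : X} {c : ℝ}
    (h : |v| ≤ c • u) : ‖S v‖ ≤ ‖c • S u‖ := by
  have hle : |S v| ≤ c • S u :=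
    (abs_map_le_map_abs hS v).trans (by simpa only [map_smul] using hS h)
  exact norm_le_norm_of_abs_le_abs (by rwa [abs_of_nonneg ((abs_nonneg _).trans hle)])

theorem tendsto_apply_zero_of_abs_le_smul {ι : Type*} {l : Filter ι} {S : ι → F}
    (hS : ∀ i, Monotone (S i)) {u v : X} (hu : Tendsto (fun i => S i u) l (𝓝 0)) {c : ℝ}
    (h : |v| ≤ c • u) : Tendsto (fun i => S i v) l (𝓝 0) :=
  squeeze_zero_norm (fun i => norm_map_le_of_abs_le_smul (hS i) h)
    (by simpa using (hu.const_smul c).norm)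

end SolidNorm

section AdditiveNorm

variable {X : Type*} [NormedAddCommGroup X] [PartialOrder X] [IsOrderedAddMonoid X]

theorem norm_sub_of_le_of_norm_add (hadd : ∀ a b : X, 0 ≤ a → 0 ≤ b → ‖a + b‖ = ‖a‖ + ‖b‖)
    {a b : X} (ha : 0 ≤ a) (hab : a ≤ b) : ‖b - a‖ = ‖b‖ - ‖a‖ := by
  have := hadd a (b - a) ha (sub_nonneg.2 hab)
  rw [add_sub_cancel] at this
  linarith

theorem Antitone.cauchySeq_of_norm_add (hadd : ∀ a b : X, 0 ≤ a → 0 ≤ b → ‖a + b‖ = ‖a‖ + ‖b‖)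
    {w : ℕ → X} (hw : Antitone w) (h0 : ∀ n, 0 ≤ w n) : CauchySeq w := by
  have key : ∀ m n, m ≤ n → dist (w m) (w n) = dist ‖w m‖ ‖w n‖ := fun m n hmn => by
    have hsub := norm_sub_of_le_of_norm_add hadd (h0 n) (hw hmn)
    rw [dist_eq_norm, Real.dist_eq, hsub, abs_of_nonneg (hsub ▸ norm_nonneg _)]
  have hdist : ∀ m n, dist (w m) (w n) = dist ‖w m‖ ‖w n‖ := fun m n => by
    rcases le_total m n with h | h
    · exact key m n h
    · rw [dist_comm, key n m h, dist_comm]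
  have hnorm : Antitone fun n => ‖w n‖ := fun m n hmn => by
    have := norm_sub_of_le_of_norm_add hadd (h0 n) (hw hmn)
    linarith [norm_nonneg (w m - w n)]
  have : CauchySeq fun n => ‖w n‖ :=
    (tendsto_atTop_ciInf hnorm ⟨0, by rintro _ ⟨n, rfl⟩; exact norm_nonneg _⟩).cauchySeq
  simpa only [Metric.cauchySeq_iff, hdist] using this

theorem tendsto_iterate_zero_of_map_le [CompleteSpace X]
    (hadd : ∀ a b : X, 0 ≤ a → 0 ≤ b → ‖a + b‖ = ‖a‖ + ‖b‖)
    {f : X → X} (hf : Monotone f) (hcont : Continuous f) (hf0 : f 0 = 0)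
    (hfix : ∀ w, f w = w → w = 0) {u : X} (hu : 0 ≤ u) (hfu : f u ≤ u) :
    Tendsto (fun n => f^[n] u) atTop (𝓝 0) := by
  have hanti : Antitone fun n => f^[n] u := antitone_nat_of_succ_le fun n => by
    rw [Function.iterate_succ_apply]
    exact hf.iterate n hfu
  have hnonneg : ∀ n, 0 ≤ f^[n] u := fun n => by
    simpa only [Function.iterate_fixed hf0 n] using hf.iterate n hu
  obtain ⟨L, hL⟩ := cauchySeq_tendsto_of_complete (hanti.cauchySeq_of_norm_add hadd hnonneg)
  rwa [← hfix L (isFixedPt_of_tendsto_iterate hL hcont.continuousAt)]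

end AdditiveNorm

theorem Equicontinuous.tendsto_of_dense {ι X α : Type*} [TopologicalSpace X] [UniformSpace α]
    {l : Filter ι} {F : ι → X → α} {f : X → α} (hF : Equicontinuous F) (hf : Continuous f)
    {s : Set X} (hs : Dense s) (h : ∀ x ∈ s, Tendsto (F · x) l (𝓝 (f x))) (x : X) :
    Tendsto (F · x) l (𝓝 (f x)) :=
  (hF.isClosed_setOfPred_tendsto hf).closure_subset_iff.2 h (hs x)

theorem stmt_7_general {X : Type*} [NormedAddCommGroup X] [Lattice X] [HasSolidNorm X]
    [IsOrderedAddMonoid X] [NormedSpace ℝ X] [CompleteSpace X]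
    (hadd : ∀ u v : X, 0 ≤ u → 0 ≤ v → ‖u + v‖ = ‖u‖ + ‖v‖)
    (T : X →L[ℝ] X) (hpos : ∀ w : X, 0 ≤ w → 0 ≤ T w) (hnorm : ‖T‖ ≤ 1)
    (hker : ∀ w : X, T w = w → w = 0)
    (u : X) (hu : 0 ≤ u)
    (hqi : Dense {w : X | ∃ c : ℝ, |w| ≤ c • u})
    (hTu : T u ≤ u) :
    ∀ v : X, Tendsto (fun N : ℕ => (N : ℝ)⁻¹ • ∑ n ∈ Finset.range N, (T ^ n) v)
      atTop (𝓝 0) := by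
  have hT : Monotone T := (monotone_iff_map_nonneg T).2 hpos
  have hpow : ∀ n, ⇑(T ^ n) = (⇑T)^[n] := FunLike.coe_pow_eq_iterate T
  have hu0 : Tendsto (fun n => (T ^ n) u) atTop (𝓝 0) := by
    simpa only [hpow] using
      tendsto_iterate_zero_of_map_le hadd hT T.continuous (map_zero T) hker hu hTu
  have hequi : Equicontinuous fun n : ℕ => ⇑(T ^ n) := by
    have hT1 : LipschitzWith 1 T := T.lipschitzWith_of_opNorm_le (by simpa using hnorm)
    refine (LipschitzWith.uniformEquicontinuous _ 1 fun n => ?_).equicontinuous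
    simpa only [hpow, one_pow] using hT1.iterate n
  intro v
  refine (hequi.tendsto_of_dense continuous_const hqi ?_ v).cesaro_smul
  rintro w ⟨c, hc⟩
  exact tendsto_apply_zero_of_abs_le_smul (fun n => hpow n ▸ hT.iterate n) hu0 hc

/-- If a substochastic operator `T` on an AL space has trivial fixed space and dominates a
quasi-interior element (`T u ≤ u`, `u > 0`, the order ideal of `u` dense), then all Cesàro
averages of `T` converge to `0`. -/
theorem stmt_7 {X : Type*} [NormedAddCommGroup X] [Lattice X] [HasSolidNorm X]
    [IsOrderedAddMonoid X] [NormedSpace ℝ X] [CompleteSpace X]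
    (hadd : ∀ u v : X, 0 ≤ u → 0 ≤ v → ‖u + v‖ = ‖u‖ + ‖v‖)
    (T : X →L[ℝ] X) (hpos : ∀ w : X, 0 ≤ w → 0 ≤ T w) (hnorm : ‖T‖ ≤ 1)
    (hker : ∀ w : X, T w = w → w = 0)
    (u : X) (hu : 0 ≤ u) (hune : u ≠ 0)
    (hqi : Dense {w : X | ∃ c : ℝ, |w| ≤ c • u})
    (hTu : T u ≤ u) :
    ∀ v : X, Tendsto (fun N : ℕ => (N : ℝ)⁻¹ • ∑ n ∈ Finset.range N, (T ^ n) v)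
      atTop (𝓝 0) :=
  stmt_7_general hadd T hpos hnorm hker u hu hqi hTu
end

section
/- Let A be a resolvent positive operator on an AL space X and B : D(A) → X a positive operator such that α(Au + Bu) ≤ 0 for all u ∈ D(A) ∩ X₊, where α is the positive functional with α(u) = ‖u‖ on X₊. Then for every λ > 0 the operator B R(λ,A) is substochastic, i.e., positive with norm at most 1. -/
/-! For `0 ≤ f` put `u = R f ≥ 0`, so that `A u = λ u - f`. Since `α` is the norm on the positive
cone, `α(Au + Bu) ≤ 0` reads `λ‖u‖ - ‖f‖ + ‖Bu‖ ≤ 0`, whence `‖B R f‖ ≤ ‖f‖`. A general `f` is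
split as `f⁺ - f⁻`, and additivity of the norm on the cone gives `‖f⁺‖ + ‖f⁻‖ = ‖f‖`. -/

theorem norm_le_of_norm_le_of_nonneg {E F : Type*} [NormedAddCommGroup E] [Lattice E]
    [IsOrderedAddMonoid E] [HasSolidNorm E] [SeminormedAddCommGroup F]
    (hadd : ∀ u v : E, 0 ≤ u → 0 ≤ v → ‖u + v‖ = ‖u‖ + ‖v‖)
    (T : E →+ F) (hT : ∀ f : E, 0 ≤ f → ‖T f‖ ≤ ‖f‖) (f : E) : ‖T f‖ ≤ ‖f‖ :=
  calc ‖T f‖ = ‖T f⁺ - T f⁻‖ := by rw [← map_sub, posPart_sub_negPart]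
    _ ≤ ‖T f⁺‖ + ‖T f⁻‖ := norm_sub_le _ _
    _ ≤ ‖f⁺‖ + ‖f⁻‖ := add_le_add (hT _ (posPart_nonneg f)) (hT _ (negPart_nonneg f))
    _ = ‖f‖ := by
      rw [← hadd _ _ (posPart_nonneg f) (negPart_nonneg f), posPart_add_negPart, norm_abs_eq_norm]

theorem norm_perturbation_le_of_resolvent_eq {X : Type*} [NormedAddCommGroup X] [Lattice X]
    [NormedSpace ℝ X] {α : X →L[ℝ] ℝ} (hα : ∀ u : X, 0 ≤ u → α u = ‖u‖)
    {p : Submodule ℝ X} {A B : p →ₗ[ℝ] X} (hBpos : ∀ u : p, 0 ≤ (u : X) → 0 ≤ B u)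
    (hdiss : ∀ u : p, 0 ≤ (u : X) → α (A u + B u) ≤ 0) {lam : ℝ} (hlam : 0 ≤ lam)
    {u : p} {f : X} (hu : 0 ≤ (u : X)) (hf : 0 ≤ f) (hres : lam • (u : X) - A u = f) :
    ‖B u‖ ≤ ‖f‖ := by
  have hAu : α (A u) = lam * ‖(u : X)‖ - ‖f‖ := by
    rw [← sub_sub_cancel (lam • (u : X)) (A u), hres, map_sub, map_smul, hα _ hu, hα _ hf,
      smul_eq_mul]
  have hdiss_u : α (A u) + ‖B u‖ ≤ 0 := by
    simpa only [map_add, hα _ (hBpos u hu)] using hdiss u hu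
  linarith [mul_nonneg hlam (norm_nonneg (u : X))]

theorem stmt_8_general {X : Type*} [NormedAddCommGroup X] [Lattice X] [IsOrderedAddMonoid X] [HasSolidNorm X] [NormedSpace ℝ X]
    (hadd : ∀ u v : X, 0 ≤ u → 0 ≤ v → ‖u + v‖ = ‖u‖ + ‖v‖)
    (α : X →L[ℝ] ℝ) (hα : ∀ u : X, 0 ≤ u → α u = ‖u‖)
    (p : Submodule ℝ X) (A B : p →ₗ[ℝ] X)
    (hBpos : ∀ u : p, 0 ≤ (u : X) → 0 ≤ B u)
    (hdiss : ∀ u : p, 0 ≤ (u : X) → α (A u + B u) ≤ 0)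
    (lam : ℝ) (hlam : 0 < lam)
    (R : X →L[ℝ] X) (hRpos : ∀ f : X, 0 ≤ f → 0 ≤ R f)
    (hmem : ∀ f : X, R f ∈ p)
    (hright : ∀ f : X, lam • (R f) - A ⟨R f, hmem f⟩ = f) :
    (∀ f : X, 0 ≤ f → 0 ≤ B ⟨R f, hmem f⟩) ∧ (∀ f : X, ‖B ⟨R f, hmem f⟩‖ ≤ ‖f‖) := by
  let BR : X →ₗ[ℝ] X := B ∘ₗ (R : X →ₗ[ℝ] X).codRestrict p hmem
  refine ⟨fun f hf => hBpos _ (hRpos f hf), norm_le_of_norm_le_of_nonneg hadd BR.toAddMonoidHom ?_⟩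
  intro f hf
  exact norm_perturbation_le_of_resolvent_eq hα hBpos hdiss hlam.le (hRpos f hf) hf (hright f)

/-- In the Kato perturbation setting (`A` resolvent positive on an AL space, `B` positive,
`α(Au + Bu) ≤ 0` on the positive part of the domain), `B R(λ,A)` is substochastic
for every `λ > 0`. -/
theorem stmt_8 {X : Type*} [NormedAddCommGroup X] [Lattice X] [IsOrderedAddMonoid X] [HasSolidNorm X] [NormedSpace ℝ X] [CompleteSpace X]
    (hadd : ∀ u v : X, 0 ≤ u → 0 ≤ v → ‖u + v‖ = ‖u‖ + ‖v‖)
    (α : X →L[ℝ] ℝ) (hα : ∀ u : X, 0 ≤ u → α u = ‖u‖)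
    (p : Submodule ℝ X) (A B : p →ₗ[ℝ] X)
    (hBpos : ∀ u : p, 0 ≤ (u : X) → 0 ≤ B u)
    (hdiss : ∀ u : p, 0 ≤ (u : X) → α (A u + B u) ≤ 0)
    (lam : ℝ) (hlam : 0 < lam)
    (R : X →L[ℝ] X) (hRpos : ∀ f : X, 0 ≤ f → 0 ≤ R f)
    (hmem : ∀ f : X, R f ∈ p)
    (hleft : ∀ u : p, R (lam • (u : X) - A u) = u)
    (hright : ∀ f : X, lam • (R f) - A ⟨R f, hmem f⟩ = f) :
    (∀ f : X, 0 ≤ f → 0 ≤ B ⟨R f, hmem f⟩) ∧ (∀ f : X, ‖B ⟨R f, hmem f⟩‖ ≤ ‖f‖) :=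
  stmt_8_general hadd α hα p A B hBpos hdiss lam hlam R hRpos hmem hright
end

section
/- Under the assumptions of Kato-type perturbation (A resolvent positive on an AL space X, B : D(A) → X positive, α(Au + Bu) ≤ 0 on D(A)₊), for every λ > 0 the operators I − B R(λ,A) and λI − (A + B) are injective. -/
/-!
Testing the dissipativity `α (A u + B u) ≤ 0` at `u = R g` with `g ≥ 0`, where
`A (R g) = λ R g - g` and `α` is the norm on the positive cone, gives `‖B R g‖ + λ ‖R g‖ ≤ ‖g‖`.
If `h = B R h`, positivity gives `|h| ≤ B R |h|`, hence `‖h‖ ≤ ‖h‖ - λ ‖R |h|‖`; so `R |h| = 0`,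
then `R h = 0` and `h = 0`.
Injectivity of `λ - (A + B)` reduces to this through `λ - (A + B) = (I - B R) (λ - A)`.
-/

section PositiveMaps

variable {X Y F : Type*} [Lattice X] [AddCommGroup X] [IsOrderedAddMonoid X]
  [Lattice Y] [AddCommGroup Y] [IsOrderedAddMonoid Y] [FunLike F X Y] [AddMonoidHomClass F X Y]

theorem abs_map_le_map_abs_s9 {T : F} (hT : ∀ x, 0 ≤ x → 0 ≤ T x) (x : X) : |T x| ≤ T |x| := by
  refine abs_le'.2 ⟨?_, ?_⟩
  · simpa [map_sub] using hT _ (sub_nonneg.2 (le_abs_self x))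
  · simpa [map_add, neg_le_iff_add_nonneg'] using hT _ (neg_le_iff_add_nonneg'.1 (neg_le_abs x))

end PositiveMaps

section SolidNorm

variable {X Y F : Type*} [Lattice X] [AddCommGroup X] [IsOrderedAddMonoid X]
  [NormedAddCommGroup Y] [Lattice Y] [IsOrderedAddMonoid Y] [HasSolidNorm Y]
  [FunLike F X Y] [AddMonoidHomClass F X Y]

theorem norm_map_le_norm_map_abs {T : F} (hT : ∀ x, 0 ≤ x → 0 ≤ T x) (x : X) :
    ‖T x‖ ≤ ‖T |x|‖ :=
  norm_le_norm_of_abs_le_abs <| (abs_of_nonneg (hT _ (abs_nonneg x))).symm ▸ abs_map_le_map_abs_s9 hT x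

end SolidNorm

section Contraction

variable {X Z F G : Type*}
  [NormedAddCommGroup X] [Lattice X] [IsOrderedAddMonoid X] [HasSolidNorm X]
  [NormedAddCommGroup Z] [Lattice Z] [IsOrderedAddMonoid Z] [HasSolidNorm Z]
  [FunLike F X X] [AddMonoidHomClass F X X] [FunLike G X Z] [AddMonoidHomClass G X Z]

theorem map_eq_zero_of_apply_eq_self {T : F} {S : G} (hT : ∀ x, 0 ≤ x → 0 ≤ T x)
    (hS : ∀ x, 0 ≤ x → 0 ≤ S x) {lam : ℝ} (hlam : 0 < lam)
    (hbound : ∀ g, 0 ≤ g → ‖T g‖ + lam * ‖S g‖ ≤ ‖g‖) {x : X} (hx : T x = x) : S x = 0 := by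
  have hT_abs : ‖x‖ ≤ ‖T |x|‖ := by simpa only [hx] using norm_map_le_norm_map_abs hT x
  have hbound_abs : ‖T |x|‖ + lam * ‖S |x|‖ ≤ ‖x‖ := norm_abs_eq_norm x ▸ hbound |x| (abs_nonneg x)
  have hS_abs : ‖S |x|‖ ≤ 0 := by nlinarith [norm_nonneg (S |x|)]
  exact norm_le_zero_iff.1 ((norm_map_le_norm_map_abs hS x).trans hS_abs)

end Contraction

section Kato

variable {X : Type*} [NormedAddCommGroup X] [Lattice X] [NormedSpace ℝ X]
  {α : X →L[ℝ] ℝ} {p : Submodule ℝ X} {A B : p →ₗ[ℝ] X} {lam : ℝ} {R : X →L[ℝ] X}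
  {hmem : ∀ f : X, R f ∈ p}

theorem norm_map_resolvent_add_le (hα : ∀ u : X, 0 ≤ u → α u = ‖u‖)
    (hBpos : ∀ u : p, 0 ≤ (u : X) → 0 ≤ B u) (hdiss : ∀ u : p, 0 ≤ (u : X) → α (A u + B u) ≤ 0)
    (hRpos : ∀ f : X, 0 ≤ f → 0 ≤ R f) (hright : ∀ f : X, lam • (R f) - A ⟨R f, hmem f⟩ = f)
    {g : X} (hg : 0 ≤ g) : ‖B ⟨R g, hmem g⟩‖ + lam * ‖R g‖ ≤ ‖g‖ := by
  have hRg := hRpos g hg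
  have hA : A ⟨R g, hmem g⟩ = lam • R g - g := by
    rw [← sub_sub_cancel (lam • R g) (A ⟨R g, hmem g⟩), hright g]
  have hd := hdiss ⟨R g, hmem g⟩ hRg
  rw [hA, map_add, map_sub, map_smul, hα _ hRg, hα _ hg, hα _ (hBpos _ hRg), smul_eq_mul] at hd
  linarith

variable [IsOrderedAddMonoid X] [HasSolidNorm X]

theorem eq_zero_of_map_resolvent_eq_self (hα : ∀ u : X, 0 ≤ u → α u = ‖u‖)
    (hBpos : ∀ u : p, 0 ≤ (u : X) → 0 ≤ B u) (hdiss : ∀ u : p, 0 ≤ (u : X) → α (A u + B u) ≤ 0)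
    (hRpos : ∀ f : X, 0 ≤ f → 0 ≤ R f) (hright : ∀ f : X, lam • (R f) - A ⟨R f, hmem f⟩ = f)
    (hlam : 0 < lam) {h : X} (hh : B ⟨R h, hmem h⟩ = h) : h = 0 := by
  have hRh : R h = 0 :=
    map_eq_zero_of_apply_eq_self (T := B ∘ₗ (R : X →ₗ[ℝ] X).codRestrict p hmem)
      (fun g hg => hBpos _ (hRpos g hg)) hRpos hlam
      (fun g hg => norm_map_resolvent_add_le hα hBpos hdiss hRpos hright hg) hh
  rw [← hh, show (⟨R h, hmem h⟩ : p) = 0 from Subtype.ext hRh, map_zero]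

theorem injective_sub_map_resolvent (hα : ∀ u : X, 0 ≤ u → α u = ‖u‖)
    (hBpos : ∀ u : p, 0 ≤ (u : X) → 0 ≤ B u) (hdiss : ∀ u : p, 0 ≤ (u : X) → α (A u + B u) ≤ 0)
    (hRpos : ∀ f : X, 0 ≤ f → 0 ≤ R f) (hright : ∀ f : X, lam • (R f) - A ⟨R f, hmem f⟩ = f)
    (hlam : 0 < lam) : Function.Injective (fun f : X => f - B ⟨R f, hmem f⟩) := by
  change Function.Injective (LinearMap.id - B ∘ₗ (R : X →ₗ[ℝ] X).codRestrict p hmem : X →ₗ[ℝ] X)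
  refine (injective_iff_map_eq_zero _).2 fun f hf => ?_
  exact eq_zero_of_map_resolvent_eq_self hα hBpos hdiss hRpos hright hlam (sub_eq_zero.1 hf).symm

theorem injective_smul_sub_add (hα : ∀ u : X, 0 ≤ u → α u = ‖u‖)
    (hBpos : ∀ u : p, 0 ≤ (u : X) → 0 ≤ B u) (hdiss : ∀ u : p, 0 ≤ (u : X) → α (A u + B u) ≤ 0)
    (hRpos : ∀ f : X, 0 ≤ f → 0 ≤ R f) (hright : ∀ f : X, lam • (R f) - A ⟨R f, hmem f⟩ = f)
    (hleft : ∀ u : p, R (lam • (u : X) - A u) = u) (hlam : 0 < lam) :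
    Function.Injective (fun u : p => lam • (u : X) - (A u + B u)) := by
  change Function.Injective (lam • p.subtype - (A + B) : p →ₗ[ℝ] X)
  refine (injective_iff_map_eq_zero _).2 fun u hu => ?_
  have hBu : B u = lam • (u : X) - A u := by
    rw [eq_comm, ← sub_eq_zero, ← hu]
    simp only [LinearMap.sub_apply, LinearMap.smul_apply, LinearMap.add_apply,
      Submodule.subtype_apply, sub_sub]
  have hf := eq_zero_of_map_resolvent_eq_self hα hBpos hdiss hRpos hright hlam
    (h := lam • (u : X) - A u) (by simp only [hleft, hBu])
  exact Subtype.ext (by rw [← hleft u, hf, map_zero, Submodule.coe_zero])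

end Kato

theorem stmt_9_general {X : Type*} [NormedAddCommGroup X] [Lattice X] [HasSolidNorm X]
    [IsOrderedAddMonoid X] [NormedSpace ℝ X]
    (α : X →L[ℝ] ℝ) (hα : ∀ u : X, 0 ≤ u → α u = ‖u‖)
    (p : Submodule ℝ X) (A B : p →ₗ[ℝ] X)
    (hBpos : ∀ u : p, 0 ≤ (u : X) → 0 ≤ B u)
    (hdiss : ∀ u : p, 0 ≤ (u : X) → α (A u + B u) ≤ 0)
    (lam : ℝ) (hlam : 0 < lam)
    (R : X →L[ℝ] X) (hRpos : ∀ f : X, 0 ≤ f → 0 ≤ R f)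
    (hmem : ∀ f : X, R f ∈ p)
    (hleft : ∀ u : p, R (lam • (u : X) - A u) = u)
    (hright : ∀ f : X, lam • (R f) - A ⟨R f, hmem f⟩ = f) :
    Function.Injective (fun f : X => f - B ⟨R f, hmem f⟩) ∧
    Function.Injective (fun u : p => lam • (u : X) - (A u + B u)) :=
  ⟨injective_sub_map_resolvent hα hBpos hdiss hRpos hright hlam,
    injective_smul_sub_add hα hBpos hdiss hRpos hright hleft hlam⟩

/-- In the Kato perturbation setting, for every `λ > 0` the operators `I - B R(λ,A)` and
`λ - (A + B)` are injective. -/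
theorem stmt_9 {X : Type*} [NormedAddCommGroup X] [Lattice X] [HasSolidNorm X]
    [IsOrderedAddMonoid X] [NormedSpace ℝ X] [CompleteSpace X]
    (hadd : ∀ u v : X, 0 ≤ u → 0 ≤ v → ‖u + v‖ = ‖u‖ + ‖v‖)
    (α : X →L[ℝ] ℝ) (hα : ∀ u : X, 0 ≤ u → α u = ‖u‖)
    (p : Submodule ℝ X) (A B : p →ₗ[ℝ] X)
    (hBpos : ∀ u : p, 0 ≤ (u : X) → 0 ≤ B u)
    (hdiss : ∀ u : p, 0 ≤ (u : X) → α (A u + B u) ≤ 0)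
    (lam : ℝ) (hlam : 0 < lam)
    (R : X →L[ℝ] X) (hRpos : ∀ f : X, 0 ≤ f → 0 ≤ R f)
    (hmem : ∀ f : X, R f ∈ p)
    (hleft : ∀ u : p, R (lam • (u : X) - A u) = u)
    (hright : ∀ f : X, lam • (R f) - A ⟨R f, hmem f⟩ = f) :
    Function.Injective (fun f : X => f - B ⟨R f, hmem f⟩) ∧
    Function.Injective (fun u : p => lam • (u : X) - (A u + B u)) :=
  stmt_9_general α hα p A B hBpos hdiss lam hlam R hRpos hmem hleft hright
end

section
/- Let A be resolvent positive on an AL space X and B : D(A) → X positive with α(Au + Bu) ≤ 0 on D(A)₊. For each λ > 0 and each u in the positive cone, the sequence of partial sums Σ_{n=0}^{N} R(λ,A)(B R(λ,A))^n u is nondecreasing in N, bounded in norm by ‖u‖/λ, and hence converges in X. -/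
open Filter Topology

/-!
Since `α` is linear and agrees with the norm on the cone, the norm is additive there. Dissipativity
at `v = R f`, where `A v = λ v - f`, gives `λ ‖R f‖ + ‖K f‖ ≤ ‖f‖` for `f ≥ 0`; applied to
`f = Kⁿ u` and telescoped, `λ ∑_{n<N} ‖R Kⁿ u‖ ≤ ‖u‖ - ‖Kᴺ u‖`. The terms are positive, so the
norm of a partial sum is the sum of the norms, which gives the bound `‖u‖ / λ`. For comparable
positive elements the distance is the difference of the norms, so the bounded increasing real
sequence of norms of the partial sums forces them to be Cauchy.
-/

theorem monotone_sum_range_succ_of_nonneg {M : Type*} [AddCommMonoid M] [PartialOrder M]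
    [IsOrderedAddMonoid M] {t : ℕ → M} (ht : ∀ n, 0 ≤ t n) :
    Monotone fun N => ∑ n ∈ Finset.range (N + 1), t n :=
  fun _ _ hMN => Finset.sum_le_sum_of_subset_of_nonneg
    (Finset.range_subset_range.mpr (Nat.succ_le_succ hMN)) fun n _ _ => ht n

theorem pow_apply_nonneg {R M : Type*} [Semiring R] [TopologicalSpace M] [AddCommMonoid M]
    [Module R M] [Preorder M] {K : M →L[R] M} (hK : ∀ f, 0 ≤ f → 0 ≤ K f) (n : ℕ) {f : M}
    (hf : 0 ≤ f) : 0 ≤ (K ^ n) f := by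
  induction n with
  | zero => exact hf
  | succ n ih => rw [pow_succ', mul_apply_eq_comp]; exact hK _ ih

section AdditiveNorm

variable {X : Type*} [NormedAddCommGroup X] [PartialOrder X] [IsOrderedAddMonoid X]
  {F : Type*} [FunLike F X ℝ] [AddMonoidHomClass F X ℝ]

theorem norm_sub_eq_norm_sub_norm_of_le {α : F} (hα : ∀ u : X, 0 ≤ u → α u = ‖u‖)
    {x y : X} (hx : 0 ≤ x) (hxy : x ≤ y) : ‖y - x‖ = ‖y‖ - ‖x‖ := by
  rw [← hα _ (sub_nonneg.mpr hxy), ← hα _ hx, ← hα _ (hx.trans hxy), map_sub]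

theorem norm_sum_eq_sum_norm_of_nonneg {α : F} (hα : ∀ u : X, 0 ≤ u → α u = ‖u‖)
    {ι : Type*} (s : Finset ι) {f : ι → X} (hf : ∀ i ∈ s, 0 ≤ f i) :
    ‖∑ i ∈ s, f i‖ = ∑ i ∈ s, ‖f i‖ := by
  rw [← hα _ (Finset.sum_nonneg hf), map_sum]
  exact Finset.sum_congr rfl fun i hi => hα _ (hf i hi)

theorem cauchySeq_of_monotone_of_norm_le {α : F} (hα : ∀ u : X, 0 ≤ u → α u = ‖u‖)
    {s : ℕ → X} (hs : Monotone s) (hs0 : 0 ≤ s 0) {C : ℝ} (hC : ∀ n, ‖s n‖ ≤ C) :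
    CauchySeq s := by
  have hdist : ∀ {m n}, m ≤ n → ‖s n - s m‖ = ‖s n‖ - ‖s m‖ := fun {m} _ hmn =>
    norm_sub_eq_norm_sub_norm_of_le hα (hs0.trans (hs (Nat.zero_le m))) (hs hmn)
  have hnorm : CauchySeq fun n => ‖s n‖ :=
    (tendsto_atTop_ciSup (fun m n hmn => sub_nonneg.mp (hdist hmn ▸ norm_nonneg _))
      ⟨C, by rintro _ ⟨n, rfl⟩; exact hC n⟩).cauchySeq
  rw [Metric.cauchySeq_iff'] at hnorm ⊢
  intro ε hε
  obtain ⟨N, hN⟩ := hnorm ε hε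
  refine ⟨N, fun n hn => ?_⟩
  rw [dist_eq_norm, hdist hn]
  exact (le_abs_self _).trans_lt (hN n hn)

end AdditiveNorm

theorem mul_sum_norm_add_norm_pow_le {X : Type*} [NormedAddCommGroup X] [Preorder X]
    [Module ℝ X] {lam : ℝ} {R K : X →L[ℝ] X} (hK : ∀ f, 0 ≤ f → 0 ≤ K f)
    (hest : ∀ f, 0 ≤ f → lam * ‖R f‖ + ‖K f‖ ≤ ‖f‖) {u : X} (hu : 0 ≤ u) (N : ℕ) :
    lam * ∑ n ∈ Finset.range N, ‖R ((K ^ n) u)‖ + ‖(K ^ N) u‖ ≤ ‖u‖ := by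
  induction N with
  | zero => simp
  | succ N ih =>
    have hstep := hest _ (pow_apply_nonneg hK N hu)
    rw [Finset.sum_range_succ, pow_succ', mul_apply_eq_comp]
    linarith

theorem norm_sum_range_le_norm_div {X : Type*} [NormedAddCommGroup X] [PartialOrder X]
    [IsOrderedAddMonoid X] [Module ℝ X] {F : Type*} [FunLike F X ℝ] [AddMonoidHomClass F X ℝ]
    {α : F} (hα : ∀ u : X, 0 ≤ u → α u = ‖u‖) {lam : ℝ} (hlam : 0 < lam) {R K : X →L[ℝ] X}
    (hR : ∀ f, 0 ≤ f → 0 ≤ R f) (hK : ∀ f, 0 ≤ f → 0 ≤ K f)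
    (hest : ∀ f, 0 ≤ f → lam * ‖R f‖ + ‖K f‖ ≤ ‖f‖) {u : X} (hu : 0 ≤ u) (N : ℕ) :
    ‖∑ n ∈ Finset.range N, R ((K ^ n) u)‖ ≤ ‖u‖ / lam := by
  rw [norm_sum_eq_sum_norm_of_nonneg hα _ fun n _ => hR _ (pow_apply_nonneg hK n hu),
    le_div_iff₀' hlam]
  linarith [mul_sum_norm_add_norm_pow_le hK hest hu N, norm_nonneg ((K ^ N) u)]

theorem mul_norm_resolvent_add_norm_le {X : Type*} [NormedAddCommGroup X] [PartialOrder X]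
    [Module ℝ X] {F : Type*} [FunLike F X ℝ] [LinearMapClass F ℝ X ℝ] {α : F}
    (hα : ∀ u : X, 0 ≤ u → α u = ‖u‖) {p : Submodule ℝ X} {A B : p →ₗ[ℝ] X}
    (hdiss : ∀ u : p, 0 ≤ (u : X) → α (A u + B u) ≤ 0) {lam : ℝ} {R : X →L[ℝ] X}
    (hRpos : ∀ f : X, 0 ≤ f → 0 ≤ R f) (hmem : ∀ f : X, R f ∈ p)
    (hright : ∀ f : X, lam • (R f) - A ⟨R f, hmem f⟩ = f)
    {K : X →L[ℝ] X} (hK : ∀ f : X, K f = B ⟨R f, hmem f⟩) (hKpos : ∀ f, 0 ≤ f → 0 ≤ K f)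
    {f : X} (hf : 0 ≤ f) : lam * ‖R f‖ + ‖K f‖ ≤ ‖f‖ := by
  have hA : A ⟨R f, hmem f⟩ = lam • R f - f :=
    eq_sub_of_add_eq (sub_eq_iff_eq_add'.mp (hright f)).symm
  have hd := hdiss ⟨R f, hmem f⟩ (hRpos f hf)
  rw [hA, ← hK, map_add, map_sub, map_smul, smul_eq_mul, hα _ (hRpos f hf), hα _ hf,
    hα _ (hKpos f hf)] at hd
  linarith

theorem stmt_10_general {X : Type*} [NormedAddCommGroup X] [Lattice X] [IsOrderedAddMonoid X] [NormedSpace ℝ X] [CompleteSpace X]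
    (α : X →L[ℝ] ℝ) (hα : ∀ u : X, 0 ≤ u → α u = ‖u‖)
    (p : Submodule ℝ X) (A B : p →ₗ[ℝ] X)
    (hBpos : ∀ u : p, 0 ≤ (u : X) → 0 ≤ B u)
    (hdiss : ∀ u : p, 0 ≤ (u : X) → α (A u + B u) ≤ 0)
    (lam : ℝ) (hlam : 0 < lam)
    (R : X →L[ℝ] X) (hRpos : ∀ f : X, 0 ≤ f → 0 ≤ R f)
    (hmem : ∀ f : X, R f ∈ p)
    (hright : ∀ f : X, lam • (R f) - A ⟨R f, hmem f⟩ = f)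
    (K : X →L[ℝ] X) (hK : ∀ f : X, K f = B ⟨R f, hmem f⟩)
    (u : X) (hu : 0 ≤ u) :
    Monotone (fun N : ℕ => ∑ n ∈ Finset.range (N + 1), R ((K ^ n) u)) ∧
    (∀ N : ℕ, ‖∑ n ∈ Finset.range (N + 1), R ((K ^ n) u)‖ ≤ ‖u‖ / lam) ∧
    (∃ w : X, Tendsto (fun N : ℕ => ∑ n ∈ Finset.range (N + 1), R ((K ^ n) u))
      atTop (𝓝 w)) := by
  have hKpos : ∀ f : X, 0 ≤ f → 0 ≤ K f := fun f hf => hK f ▸ hBpos _ (hRpos f hf)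
  have hest : ∀ f : X, 0 ≤ f → lam * ‖R f‖ + ‖K f‖ ≤ ‖f‖ := fun _ hf =>
    mul_norm_resolvent_add_norm_le hα hdiss hRpos hmem hright hK hKpos hf
  have hmono := monotone_sum_range_succ_of_nonneg fun n => hRpos _ (pow_apply_nonneg hKpos n hu)
  have hbound : ∀ N : ℕ, ‖∑ n ∈ Finset.range (N + 1), R ((K ^ n) u)‖ ≤ ‖u‖ / lam :=
    fun N => norm_sum_range_le_norm_div hα hlam hRpos hKpos hest hu (N + 1)
  have hcauchy := cauchySeq_of_monotone_of_norm_le hα hmono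
    (Finset.sum_nonneg fun n _ => hRpos _ (pow_apply_nonneg hKpos n hu)) hbound
  exact ⟨hmono, hbound, cauchySeq_tendsto_of_complete hcauchy⟩

/-- In the Kato perturbation setting, for `λ > 0` and `u ≥ 0` the partial sums
`∑_{n=0}^{N} R(λ,A)(B R(λ,A))^n u` are nondecreasing in `N`, norm-bounded by `‖u‖/λ`, and
converge in `X`. -/
theorem stmt_10 {X : Type*} [NormedAddCommGroup X] [Lattice X] [HasSolidNorm X] [IsOrderedAddMonoid X] [NormedSpace ℝ X] [CompleteSpace X]
    (hadd : ∀ u v : X, 0 ≤ u → 0 ≤ v → ‖u + v‖ = ‖u‖ + ‖v‖)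
    (α : X →L[ℝ] ℝ) (hα : ∀ u : X, 0 ≤ u → α u = ‖u‖)
    (p : Submodule ℝ X) (A B : p →ₗ[ℝ] X)
    (hBpos : ∀ u : p, 0 ≤ (u : X) → 0 ≤ B u)
    (hdiss : ∀ u : p, 0 ≤ (u : X) → α (A u + B u) ≤ 0)
    (lam : ℝ) (hlam : 0 < lam)
    (R : X →L[ℝ] X) (hRpos : ∀ f : X, 0 ≤ f → 0 ≤ R f)
    (hmem : ∀ f : X, R f ∈ p)
    (hleft : ∀ u : p, R (lam • (u : X) - A u) = u)
    (hright : ∀ f : X, lam • (R f) - A ⟨R f, hmem f⟩ = f)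
    (K : X →L[ℝ] X) (hK : ∀ f : X, K f = B ⟨R f, hmem f⟩)
    (u : X) (hu : 0 ≤ u) :
    Monotone (fun N : ℕ => ∑ n ∈ Finset.range (N + 1), R ((K ^ n) u)) ∧
    (∀ N : ℕ, ‖∑ n ∈ Finset.range (N + 1), R ((K ^ n) u)‖ ≤ ‖u‖ / lam) ∧
    (∃ w : X, Tendsto (fun N : ℕ => ∑ n ∈ Finset.range (N + 1), R ((K ^ n) u))
      atTop (𝓝 w)) :=
  stmt_10_general α hα p A B hBpos hdiss lam hlam R hRpos hmem hright K hK u hu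
end

section
/- Let T_λ (λ > 0) be a family of positive operators on an AL space X that is nondecreasing as λ decreases (T_λ ≤ T_μ for μ ≤ λ) with ‖T_λ‖ ≤ 1 for all λ. Then for every u ∈ X the limit K u = lim_{λ↓0} T_λ u exists and defines a substochastic operator K on X. -/
/-!
In an AL space the norm is additive on the positive cone, so for `0 ≤ a ≤ b` one has
`‖b - a‖ = ‖b‖ - ‖a‖`. Along a positive family `T λ u` (`u ≥ 0`) that increases as `λ ↓ 0`,
distances are therefore differences of norms, and the norms form a bounded monotone real
function, which converges; hence `T λ u` is Cauchy and converges. A general `u` is split as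
`u⁺ - u⁻`, and the pointwise limit of the contractions `T λ` is a contraction.
-/

open Filter Topology Set

lemma cauchy_map_of_eventually_dist_le {ι β γ : Type*} [PseudoMetricSpace β] [PseudoMetricSpace γ]
    {l : Filter ι} {f : ι → β} {g : ι → γ} (hg : Cauchy (l.map g))
    (hfg : ∀ᶠ p in l ×ˢ l, dist (f p.1) (f p.2) ≤ dist (g p.1) (g p.2)) :
    Cauchy (l.map f) := by
  obtain ⟨hl, hg⟩ := cauchy_map_iff.1 hg
  refine cauchy_map_iff.2 ⟨hl, ?_⟩
  rw [Metric.uniformity_eq_comap_nhds_zero, tendsto_comap_iff] at hg ⊢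
  exact squeeze_zero' (Eventually.of_forall fun _ => dist_nonneg) hfg hg

lemma ContinuousLinearMap.exists_norm_le_tendsto_apply {ι 𝕜 E F : Type*} [NontriviallyNormedField 𝕜]
    [SeminormedAddCommGroup E] [NormedSpace 𝕜 E] [NormedAddCommGroup F] [NormedSpace 𝕜 F]
    {l : Filter ι} [l.NeBot] (T : ι → E →L[𝕜] F) {C : ℝ} (hC : ∀ᶠ i in l, ‖T i‖ ≤ C)
    (hT : ∀ u, ∃ v, Tendsto (fun i => T i u) l (𝓝 v)) :
    ∃ K : E →L[𝕜] F, ‖K‖ ≤ C ∧ ∀ u, Tendsto (fun i => T i u) l (𝓝 (K u)) := by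
  choose k hk using hT
  let K : E →ₗ[𝕜] F := linearMapOfTendsto k (fun i => (T i : E →ₗ[𝕜] F)) (tendsto_pi_nhds.2 hk)
  have hK : ∀ u, ‖K u‖ ≤ C * ‖u‖ := fun u =>
    le_of_tendsto (hk u).norm <| hC.mono fun i hi => (T i).le_of_opNorm_le hi u
  obtain ⟨i, hi⟩ := hC.exists
  exact ⟨K.mkContinuous C hK, K.mkContinuous_norm_le ((norm_nonneg _).trans hi) hK, hk⟩

section AdditiveNorm

variable {X : Type*} [NormedAddCommGroup X] [PartialOrder X] [IsOrderedAddMonoid X]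

lemma norm_sub_eq_of_nonneg_of_le (hadd : ∀ u v : X, 0 ≤ u → 0 ≤ v → ‖u + v‖ = ‖u‖ + ‖v‖)
    {a b : X} (ha : 0 ≤ a) (hab : a ≤ b) : ‖b - a‖ = ‖b‖ - ‖a‖ := by
  have h := hadd (b - a) a (sub_nonneg.2 hab) ha
  rw [sub_add_cancel] at h
  linarith

lemma dist_eq_dist_norm_of_nonneg_of_le (hadd : ∀ u v : X, 0 ≤ u → 0 ≤ v → ‖u + v‖ = ‖u‖ + ‖v‖)
    {a b : X} (ha : 0 ≤ a) (hab : a ≤ b) : dist a b = dist ‖a‖ ‖b‖ := by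
  have h := norm_sub_eq_of_nonneg_of_le hadd ha hab
  rw [dist_comm, dist_eq_norm, Real.dist_eq, abs_sub_comm, h, abs_of_nonneg (h ▸ norm_nonneg _)]

lemma exists_tendsto_nhdsGT_of_antitoneOn [CompleteSpace X]
    (hadd : ∀ u v : X, 0 ≤ u → 0 ≤ v → ‖u + v‖ = ‖u‖ + ‖v‖) {f : ℝ → X} {a : ℝ}
    (hf : AntitoneOn f (Ioi a)) (hf₀ : ∀ x ∈ Ioi a, 0 ≤ f x)
    (hbdd : BddAbove ((‖f ·‖) '' Ioi a)) : ∃ v, Tendsto f (𝓝[>] a) (𝓝 v) := by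
  have hdist : ∀ x ∈ Ioi a, ∀ y ∈ Ioi a, dist (f x) (f y) = dist ‖f x‖ ‖f y‖ := by
    intro x hx y hy
    rcases le_total x y with hxy | hyx
    · rw [dist_comm, dist_eq_dist_norm_of_nonneg_of_le hadd (hf₀ y hy) (hf hx hy hxy), dist_comm]
    · exact dist_eq_dist_norm_of_nonneg_of_le hadd (hf₀ x hx) (hf hy hx hyx)
  have hnorm : AntitoneOn (‖f ·‖) (Ioi a) := fun x hx y hy hxy => by
    have := norm_sub_eq_of_nonneg_of_le hadd (hf₀ y hy) (hf hx hy hxy)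
    linarith [norm_nonneg (f x - f y)]
  refine cauchy_map_iff_exists_tendsto.1 <| cauchy_map_of_eventually_dist_le
    (hnorm.tendsto_nhdsGT hbdd).cauchy_map ?_
  filter_upwards [prod_mem_prod self_mem_nhdsWithin self_mem_nhdsWithin] with p hp
  exact (hdist _ hp.1 _ hp.2).le

end AdditiveNorm

/-- A family of positive contractions `T λ` on an AL space which is nondecreasing as `λ`
decreases admits a strong limit `K u = lim_{λ↓0} T λ u`, and `K` is substochastic. -/
theorem stmt_13 {X : Type*} [NormedAddCommGroup X] [Lattice X] [HasSolidNorm X] [IsOrderedAddMonoid X] [NormedSpace ℝ X] [CompleteSpace X]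
    (hadd : ∀ u v : X, 0 ≤ u → 0 ≤ v → ‖u + v‖ = ‖u‖ + ‖v‖)
    (T : ℝ → X →L[ℝ] X)
    (hpos : ∀ lam : ℝ, 0 < lam → ∀ u : X, 0 ≤ u → 0 ≤ T lam u)
    (hnorm : ∀ lam : ℝ, 0 < lam → ‖T lam‖ ≤ 1)
    (hmono : ∀ lam mu : ℝ, 0 < lam → lam ≤ mu → ∀ u : X, 0 ≤ u → T mu u ≤ T lam u) :
    ∃ K : X →L[ℝ] X, (∀ u : X, 0 ≤ u → 0 ≤ K u) ∧ ‖K‖ ≤ 1 ∧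
      ∀ u : X, Tendsto (fun lam : ℝ => T lam u) (𝓝[>] (0 : ℝ)) (𝓝 (K u)) := by
  have hlim_of_nonneg : ∀ u : X, 0 ≤ u → ∃ v, Tendsto (fun lam => T lam u) (𝓝[>] 0) (𝓝 v) := by
    intro u hu
    refine exists_tendsto_nhdsGT_of_antitoneOn hadd
      (fun lam hlam mu _ hle => hmono lam mu hlam hle u hu) (fun lam hlam => hpos lam hlam u hu) ?_
    refine ⟨‖u‖, ?_⟩
    rintro _ ⟨lam, hlam, rfl⟩
    exact (T lam).le_of_opNorm_le (hnorm lam hlam) u |>.trans_eq (one_mul _)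
  have hlim : ∀ u : X, ∃ v, Tendsto (fun lam => T lam u) (𝓝[>] 0) (𝓝 v) := by
    intro u
    obtain ⟨vp, hvp⟩ := hlim_of_nonneg u⁺ (posPart_nonneg u)
    obtain ⟨vn, hvn⟩ := hlim_of_nonneg u⁻ (negPart_nonneg u)
    refine ⟨vp - vn, ?_⟩
    simpa only [← map_sub, posPart_sub_negPart] using hvp.sub hvn
  obtain ⟨K, hK, hTK⟩ := ContinuousLinearMap.exists_norm_le_tendsto_apply (l := 𝓝[>] (0 : ℝ)) T
    (eventually_nhdsWithin_of_forall hnorm) hlim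
  refine ⟨K, fun u hu => ge_of_tendsto (hTK u) ?_, hK, hTK⟩
  filter_upwards [self_mem_nhdsWithin] with lam hlam using hpos lam hlam u hu
end

section
/- Let K and T be substochastic operators on an AL space X with 0 ≤ T ≤ K (i.e., T u ≤ K u for all u ≥ 0). If K is mean ergodic (Cesàro averages of K converge for every element) and Ker(I − T) = {0}, then lim_{N→∞} (1/N) Σ_{n=0}^{N−1} T^n u = 0 for every u ∈ X₊. -/
/-!
The Cesàro limit `w` of `Kⁿ u` is a positive fixed point of `K`, so `T w ≤ K w = w` and `Tⁿ w`
decreases. In an AL-space a decreasing positive sequence is norm-Cauchy, because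
`‖a - b‖ = ‖a‖ - ‖b‖` for `0 ≤ b ≤ a`; hence `Tⁿ w` converges to a fixed point of `T`, i.e. to `0`.
On the other hand `∑_{n<N} Tⁿ u ≤ ∑_{n<m} Tⁿ u + Tᵐ ∑_{n<N} Kⁿ u` for every `m`, so the norm of the
`N`-th Cesàro average of `T` at `u` is at most `‖∑_{n<m} Tⁿ u‖ / N + ‖Tᵐ A_N‖`, where `A_N` is the
`N`-th Cesàro average of `K` at `u`; letting `N → ∞` and then `m → ∞` bounds it by `‖Tᵐ w‖ → 0`.
-/

open Filter Topology

theorem nonneg_of_two_pow_nsmul_nonneg_s14 {α : Type*} [Lattice α] [AddCommGroup α]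
    [IsOrderedAddMonoid α] {a : α} (k : ℕ) (h : 0 ≤ 2 ^ k • a) : 0 ≤ a := by
  induction k generalizing a with
  | zero => simpa using h
  | succ k ih => exact nsmul_two_semiclosed (ih (by rwa [← mul_nsmul', ← pow_succ]))

theorem tendsto_nhds_zero_of_le_of_tendsto {ι : Type*} {l : Filter ι} {f : ι → ℝ}
    {g : ℕ → ι → ℝ} {L : ℕ → ℝ} (hf : ∀ i, 0 ≤ f i) (hfg : ∀ m i, f i ≤ g m i)
    (hg : ∀ m, Tendsto (g m) l (𝓝 (L m))) (hL : Tendsto L atTop (𝓝 0)) :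
    Tendsto f l (𝓝 0) := by
  refine tendsto_order.2 ⟨fun a ha => Eventually.of_forall fun i => ha.trans_le (hf i),
    fun ε hε => ?_⟩
  obtain ⟨m, hm⟩ := (hL.eventually (gt_mem_nhds hε)).exists
  exact ((hg m).eventually (gt_mem_nhds hm)).mono fun i hi => (hfg m i).trans_lt hi

section PositiveOperators

variable {E : Type*} [AddCommGroup E] [PartialOrder E] [TopologicalSpace E] [Module ℝ E]

theorem ContinuousLinearMap.monotone_pow_s14 {S : E →L[ℝ] E} (hS : Monotone S) (n : ℕ) :
    Monotone (S ^ n) := by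
  rw [FunLike.coe_pow_eq_iterate]
  exact hS.iterate n

theorem ContinuousLinearMap.pow_apply_le_pow_apply [IsOrderedAddMonoid E] {S T : E →L[ℝ] E}
    (hS : Monotone S) (hT : Monotone T) (hST : ∀ u, 0 ≤ u → S u ≤ T u) (n : ℕ)
    {u : E} (hu : 0 ≤ u) : (S ^ n) u ≤ (T ^ n) u := by
  induction n with
  | zero => rfl
  | succ n ih =>
    rw [pow_succ', pow_succ', mul_apply_eq_comp, mul_apply_eq_comp]
    exact (hS ih).trans (hST _ (map_zero (T ^ n) ▸ monotone_pow_s14 hT n hu))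

end PositiveOperators

section Cesaro

variable {E : Type*} [NormedAddCommGroup E] [NormedSpace ℝ E]

theorem ContinuousLinearMap.map_eq_of_tendsto_cesaro (S : E →L[ℝ] E) {u w : E}
    (h : Tendsto (fun N : ℕ => (N : ℝ)⁻¹ • ∑ n ∈ Finset.range N, (S ^ n) u) atTop (𝓝 w)) :
    S w = w := by
  set A := fun N : ℕ => (N : ℝ)⁻¹ • ∑ n ∈ Finset.range N, (S ^ n) u
  have hSA : ∀ᶠ N : ℕ in atTop, (1 + (N : ℝ)⁻¹) • A (N + 1) - (N : ℝ)⁻¹ • u = S (A N) := by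
    filter_upwards [eventually_ne_atTop 0] with N hN
    have hsum : S (∑ n ∈ Finset.range N, (S ^ n) u)
        = ∑ n ∈ Finset.range (N + 1), (S ^ n) u - u := by
      simp only [Finset.sum_range_succ', map_sum, pow_succ', mul_apply_eq_comp, pow_zero,
        one_apply_eq_self, add_sub_cancel_right]
    simp only [A, map_smul, hsum, smul_sub, smul_smul]
    congr 2
    push_cast
    field_simp
  have hlim : Tendsto (fun N : ℕ => S (A N)) atTop (𝓝 ((1 + 0 : ℝ) • w - (0 : ℝ) • u)) :=
    (((tendsto_const_nhds.add tendsto_inv_atTop_nhds_zero_nat).smul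
      (h.comp (tendsto_add_atTop_nat 1))).sub
        (tendsto_inv_atTop_nhds_zero_nat.smul_const u)).congr' hSA
  rw [add_zero, one_smul, zero_smul, sub_zero] at hlim
  exact tendsto_nhds_unique ((S.continuous.tendsto w).comp h) hlim

end Cesaro

theorem norm_sub_eq_sub_norm {X : Type*} [NormedAddCommGroup X] [PartialOrder X]
    [IsOrderedAddMonoid X] (hadd : ∀ u v : X, 0 ≤ u → 0 ≤ v → ‖u + v‖ = ‖u‖ + ‖v‖) {a b : X}
    (ha : 0 ≤ a) (hab : a ≤ b) : ‖b - a‖ = ‖b‖ - ‖a‖ := by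
  rw [eq_sub_iff_add_eq, ← hadd _ _ (sub_nonneg.2 hab) ha, sub_add_cancel]

section ALSpace

variable {X : Type*} [NormedAddCommGroup X] [Lattice X] [HasSolidNorm X] [IsOrderedAddMonoid X]

/- No compatibility between the order and the real scalar action is assumed, so we pass to the
subsequence `N = 2ᵏ`, where positivity of the average follows from `nsmul_two_semiclosed`. -/
theorem nonneg_of_tendsto_cesaro [NormedSpace ℝ X] {f : ℕ → X} (hf : ∀ n, 0 ≤ f n) {w : X}
    (h : Tendsto (fun N : ℕ => (N : ℝ)⁻¹ • ∑ n ∈ Finset.range N, f n) atTop (𝓝 w)) :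
    0 ≤ w := by
  refine isClosed_nonneg.mem_of_tendsto (h.comp (tendsto_pow_atTop_atTop_of_one_lt one_lt_two))
    (Eventually.of_forall fun k => nonneg_of_two_pow_nsmul_nonneg_s14 k ?_)
  rw [Function.comp_apply, ← Nat.cast_smul_eq_nsmul ℝ, smul_smul, Nat.cast_pow, Nat.cast_ofNat,
    mul_inv_cancel₀ (by positivity), one_smul]
  exact Finset.sum_nonneg fun n _ => hf n

theorem norm_le_norm_of_nonneg_of_le {a b : X} (ha : 0 ≤ a) (hab : a ≤ b) : ‖a‖ ≤ ‖b‖ :=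
  norm_le_norm_of_abs_le_abs (by rwa [abs_of_nonneg ha, abs_of_nonneg (ha.trans hab)])

theorem cauchySeq_of_antitone_of_nonneg
    (hadd : ∀ u v : X, 0 ≤ u → 0 ≤ v → ‖u + v‖ = ‖u‖ + ‖v‖) {b : ℕ → X} (hb : Antitone b)
    (hb0 : ∀ n, 0 ≤ b n) : CauchySeq b := by
  have hnorm : CauchySeq fun n => ‖b n‖ :=
    (tendsto_atTop_ciInf (fun n m h => norm_le_norm_of_nonneg_of_le (hb0 m) (hb h))
      ⟨0, Set.forall_mem_range.2 fun n => norm_nonneg _⟩).cauchySeq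
  refine Metric.cauchySeq_iff'.2 fun ε hε => ?_
  obtain ⟨N, hN⟩ := Metric.cauchySeq_iff'.1 hnorm ε hε
  refine ⟨N, fun n hn => ?_⟩
  rw [dist_comm, dist_eq_norm, norm_sub_eq_sub_norm hadd (hb0 n) (hb hn)]
  have hdist := hN n hn
  rw [Real.dist_eq, abs_sub_comm] at hdist
  exact (le_abs_self _).trans_lt hdist

theorem ContinuousLinearMap.tendsto_pow_apply_nhds_zero [NormedSpace ℝ X] [CompleteSpace X]
    (hadd : ∀ u v : X, 0 ≤ u → 0 ≤ v → ‖u + v‖ = ‖u‖ + ‖v‖) {T : X →L[ℝ] X} (hT : Monotone T)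
    (hker : ∀ u : X, T u = u → u = 0) {w : X} (hw : 0 ≤ w) (hTw : T w ≤ w) :
    Tendsto (fun n => (T ^ n) w) atTop (𝓝 0) := by
  have hsucc : ∀ n, (T ^ (n + 1)) w = T ((T ^ n) w) := fun n => by
    rw [pow_succ', mul_apply_eq_comp]
  have hanti : Antitone fun n => (T ^ n) w := antitone_nat_of_succ_le fun n => by
    rw [pow_succ, mul_apply_eq_comp]
    exact monotone_pow_s14 hT n hTw
  have hnonneg : ∀ n, 0 ≤ (T ^ n) w := fun n => map_zero (T ^ n) ▸ monotone_pow_s14 hT n hw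
  obtain ⟨z, hz⟩ := cauchySeq_tendsto_of_complete
    (cauchySeq_of_antitone_of_nonneg hadd hanti hnonneg)
  have hTz : T z = z := tendsto_nhds_unique ((T.continuous.tendsto z).comp hz)
    ((hz.comp (tendsto_add_atTop_nat 1)).congr hsucc)
  rwa [hker z hTz] at hz

theorem ContinuousLinearMap.norm_sum_pow_apply_le [NormedSpace ℝ X] {S T : X →L[ℝ] X}
    (hS : Monotone S) (hT : Monotone T) (hST : ∀ u, 0 ≤ u → S u ≤ T u) {u : X} (hu : 0 ≤ u)
    (m N : ℕ) :
    ‖∑ n ∈ Finset.range N, (S ^ n) u‖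
      ≤ ‖∑ n ∈ Finset.range m, (S ^ n) u‖ + ‖(S ^ m) (∑ n ∈ Finset.range N, (T ^ n) u)‖ := by
  have hSu : ∀ n, 0 ≤ (S ^ n) u := fun n => map_zero (S ^ n) ▸ monotone_pow_s14 hS n hu
  have hsum : ∑ n ∈ Finset.range N, (S ^ n) u
      ≤ ∑ n ∈ Finset.range m, (S ^ n) u + (S ^ m) (∑ n ∈ Finset.range N, (T ^ n) u) := by
    calc ∑ n ∈ Finset.range N, (S ^ n) u
        ≤ ∑ n ∈ Finset.range (m + N), (S ^ n) u :=
          Finset.sum_le_sum_of_subset_of_nonneg (Finset.range_subset_range.2 (by omega))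
            fun n _ _ => hSu n
      _ = ∑ n ∈ Finset.range m, (S ^ n) u + (S ^ m) (∑ n ∈ Finset.range N, (S ^ n) u) := by
          simp only [Finset.sum_range_add, pow_add, mul_apply_eq_comp, map_sum]
      _ ≤ _ := by
          gcongr
          exact monotone_pow_s14 hS m
            (Finset.sum_le_sum fun n _ => pow_apply_le_pow_apply hS hT hST n hu)
  exact (norm_le_norm_of_nonneg_of_le (Finset.sum_nonneg fun n _ => hSu n) hsum).trans
    (norm_add_le _ _)

end ALSpace

theorem stmt_14_general {X : Type*} [NormedAddCommGroup X] [Lattice X] [HasSolidNorm X]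
    [IsOrderedAddMonoid X] [NormedSpace ℝ X] [CompleteSpace X]
    (hadd : ∀ u v : X, 0 ≤ u → 0 ≤ v → ‖u + v‖ = ‖u‖ + ‖v‖)
    (K T : X →L[ℝ] X)
    (hKpos : ∀ u : X, 0 ≤ u → 0 ≤ K u)
    (hTpos : ∀ u : X, 0 ≤ u → 0 ≤ T u)
    (hdom : ∀ u : X, 0 ≤ u → T u ≤ K u)
    (hKerg : ∀ u : X, ∃ w : X,
      Tendsto (fun N : ℕ => (N : ℝ)⁻¹ • ∑ n ∈ Finset.range N, (K ^ n) u) atTop (𝓝 w))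
    (hker : ∀ u : X, T u = u → u = 0) :
    ∀ u : X, 0 ≤ u →
      Tendsto (fun N : ℕ => (N : ℝ)⁻¹ • ∑ n ∈ Finset.range N, (T ^ n) u) atTop (𝓝 0) := by
  intro u hu
  have hK : Monotone K := (monotone_iff_map_nonneg K).2 hKpos
  have hT : Monotone T := (monotone_iff_map_nonneg T).2 hTpos
  obtain ⟨w, hw⟩ := hKerg u
  have hw0 : 0 ≤ w :=
    nonneg_of_tendsto_cesaro (fun n => map_zero (K ^ n) ▸ K.monotone_pow_s14 hK n hu) hw
  have hTw : T w ≤ w := (hdom w hw0).trans (K.map_eq_of_tendsto_cesaro hw).le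
  set A := fun N : ℕ => (N : ℝ)⁻¹ • ∑ n ∈ Finset.range N, (K ^ n) u
  set g := fun m N : ℕ => (N : ℝ)⁻¹ * ‖∑ n ∈ Finset.range m, (T ^ n) u‖ + ‖(T ^ m) (A N)‖
  have hbound : ∀ m N : ℕ, ‖(N : ℝ)⁻¹ • ∑ n ∈ Finset.range N, (T ^ n) u‖ ≤ g m N :=
      fun m N => by
    simp only [g, A, norm_smul, map_smul, Real.norm_eq_abs, abs_inv, Nat.abs_cast, ← mul_add]
    gcongr
    exact T.norm_sum_pow_apply_le hT hK hdom hu m N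
  have hg : ∀ m, Tendsto (g m) atTop (𝓝 ‖(T ^ m) w‖) := fun m => by
    have h := (tendsto_inv_atTop_nhds_zero_nat.mul_const ‖∑ n ∈ Finset.range m, (T ^ n) u‖).add
      ((continuous_norm.tendsto _).comp (((T ^ m).continuous.tendsto w).comp hw))
    rwa [zero_mul, zero_add] at h
  rw [tendsto_zero_iff_norm_tendsto_zero]
  exact tendsto_nhds_zero_of_le_of_tendsto (fun N => norm_nonneg _) hbound hg
    (tendsto_norm_zero.comp (T.tendsto_pow_apply_nhds_zero hadd hT hker hw0 hTw))

/-- If `K` is a mean ergodic substochastic operator dominating a substochastic operator `T`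
with trivial fixed space of `I - T`, then the Cesàro averages of `T` tend to `0` on the
positive cone. -/
theorem stmt_14 {X : Type*} [NormedAddCommGroup X] [Lattice X] [HasSolidNorm X]
    [IsOrderedAddMonoid X] [NormedSpace ℝ X] [CompleteSpace X]
    (hadd : ∀ u v : X, 0 ≤ u → 0 ≤ v → ‖u + v‖ = ‖u‖ + ‖v‖)
    (K T : X →L[ℝ] X)
    (hKpos : ∀ u : X, 0 ≤ u → 0 ≤ K u) (hKnorm : ‖K‖ ≤ 1)
    (hTpos : ∀ u : X, 0 ≤ u → 0 ≤ T u) (hTnorm : ‖T‖ ≤ 1)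
    (hdom : ∀ u : X, 0 ≤ u → T u ≤ K u)
    (hKerg : ∀ u : X, ∃ w : X,
      Tendsto (fun N : ℕ => (N : ℝ)⁻¹ • ∑ n ∈ Finset.range N, (K ^ n) u) atTop (𝓝 w))
    (hker : ∀ u : X, T u = u → u = 0) :
    ∀ u : X, 0 ≤ u →
      Tendsto (fun N : ℕ => (N : ℝ)⁻¹ • ∑ n ∈ Finset.range N, (T ^ n) u) atTop (𝓝 0) :=
  stmt_14_general hadd K T hKpos hTpos hdom hKerg hker
end

section
/- For the one-dimensional gene-expression flow φ_t(x,s) = (e^{−γt} x, s + t) on (0,∞)×(0,∞) with jump rate q(x,s) = ϱ(s) where ϱ(s) = h_T(s)/∫_s^∞ h_T(r) dr for a probability density h_T on (0,∞), the operator Ψ(λ) defined by Ψ(λ)f_∂(x,s) = e^{γs − λs − ∫_0^s ϱ(s−r) dr} f_∂(e^{γs}x, 0) followed by the boundary/burst operator Ψ satisfies ‖Ψ Ψ(λ)‖ = ∫_0^∞ e^{−λs} h_T(s) ds < 1 for every λ > 0. -/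
/-
Since `ϱ` is the hazard rate of `h_T`, the cumulative hazard `∫₀ˢ ϱ` is `-log` of the survival
function (FTC for the absolutely continuous distribution function), so
`ϱ(s) · exp (-∫₀ˢ ϱ) = h_T(s)` for a.e. `s`. The remaining factor `e^{γs}` is the Jacobian of the
dilation `y ↦ e^{γs} y`, and convolution with the probability density `h` preserves mass, so by
Tonelli the total mass of `Ψ Ψ(λ) f` is `∫ e^{-λs} h_T(s) ds · ∫ f`. This Laplace transform is
`< 1` because `e^{-λs} < 1` for `s > 0` and `h_T` has positive mass.
-/

open MeasureTheory Set Filter Topology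
open scoped ENNReal NNReal Interval

theorem LipschitzOnWith.comp_absolutelyContinuousOnInterval {X Y : Type*}
    [PseudoMetricSpace X] [PseudoMetricSpace Y] {g : X → Y} {K : ℝ≥0} {t : Set X}
    {f : ℝ → X} {a b : ℝ} (hg : LipschitzOnWith K g t) (hft : MapsTo f (uIcc a b) t)
    (hf : AbsolutelyContinuousOnInterval f a b) :
    AbsolutelyContinuousOnInterval (g ∘ f) a b := by
  have hK := Tendsto.const_mul (K : ℝ) hf
  rw [mul_zero] at hK
  refine squeeze_zero' (Eventually.of_forall fun _ ↦ Finset.sum_nonneg fun _ _ ↦ dist_nonneg)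
    ?_ hK
  filter_upwards [mem_inf_of_right (mem_principal_self _)] with E hE
  rw [Finset.mul_sum]
  exact Finset.sum_le_sum fun i hi ↦
    hg.dist_le_mul _ (hft (hE.1 i hi).1) _ (hft (hE.1 i hi).2)

-- Where the survival integral vanishes, `hazardRate f x = 0` by the convention `x / 0 = 0`.
noncomputable def hazardRate (f : ℝ → ℝ) (x : ℝ) : ℝ := f x / ∫ t in Ioi x, f t

theorem integral_hazardRate_eq_log_sub_log {f : ℝ → ℝ} {a b : ℝ} (hab : a ≤ b)
    (hf0 : ∀ x, 0 ≤ f x) (hf : IntegrableOn f (Ioi a)) (hb : 0 < ∫ x in Ioi b, f x) :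
    ∫ x in a..b, hazardRate f x = Real.log (∫ x in Ioi a, f x) - Real.log (∫ x in Ioi b, f x) := by
  set M := ∫ x in Ioi a, f x
  set Φ : ℝ → ℝ := fun x ↦ ∫ t in a..x, f t
  have hfab : IntervalIntegrable f volume a b :=
    (intervalIntegrable_iff_integrableOn_Ioc_of_le hab).2 (hf.mono_set Ioc_subset_Ioi_self)
  have hsurv : ∀ x, a ≤ x → ∫ t in Ioi x, f t = M - Φ x := fun x hx ↦ by
    linarith [intervalIntegral.integral_Ioi_sub_Ioi hf hx]
  have hsurv_le : ∀ x ∈ uIcc a b, ∫ t in Ioi b, f t ≤ M - Φ x := fun x hx ↦ by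
    obtain ⟨hax, hxb⟩ := uIcc_of_le hab ▸ hx
    rw [← hsurv x hax]
    exact setIntegral_mono_set (hf.mono_set (Ioi_subset_Ioi hax))
      (Eventually.of_forall hf0) (Ioi_subset_Ioi hxb).eventuallyLE
  have hmaps : MapsTo Φ (uIcc a b) (Icc 0 (Φ b)) := fun x hx ↦
    ⟨intervalIntegral.integral_nonneg (uIcc_of_le hab ▸ hx).1 fun t _ ↦ hf0 t,
      by linarith [hsurv_le x hx, hsurv b hab]⟩
  have hlog : ContDiffOn ℝ 1 (fun u ↦ Real.log (M - u)) (Icc 0 (Φ b)) :=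
    (contDiffOn_const.sub contDiffOn_id).log fun u hu ↦
      (show 0 < M - u by linarith [hsurv b hab, hu.2]).ne'
  obtain ⟨K, hK⟩ := hlog.exists_lipschitzOnWith one_ne_zero (convex_Icc _ _) isCompact_Icc
  have hG := hK.comp_absolutelyContinuousOnInterval hmaps
    (hfab.absolutelyContinuousOnInterval_intervalIntegral left_mem_uIcc)
  have hderiv : ∀ᵐ x, x ∈ Ι a b → -deriv ((fun u ↦ Real.log (M - u)) ∘ Φ) x = hazardRate f x := by
    filter_upwards [hfab.ae_hasDerivAt_integral] with x hx hxab
    have hxI : x ∈ uIcc a b := uIoc_subset_uIcc hxab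
    have hax : a ≤ x := (uIoc_of_le hab ▸ hxab).1.le
    have hpos : 0 < M - Φ x := hb.trans_le (hsurv_le x hxI)
    have hd : HasDerivAt ((fun u ↦ Real.log (M - u)) ∘ Φ) (-f x / (M - Φ x)) x :=
      ((hx hxI a left_mem_uIcc).const_sub M).log hpos.ne'
    rw [hd.deriv, hazardRate, hsurv x hax]
    simp [neg_div]
  rw [← intervalIntegral.integral_congr_ae hderiv, intervalIntegral.integral_neg,
    hG.integral_deriv_eq_sub]
  simp [Φ, ← hsurv b hab]

theorem ae_eq_zero_of_integral_Ioi_eq_zero {f : ℝ → ℝ} {a : ℝ} (hf0 : ∀ x, 0 ≤ f x)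
    (hf : IntegrableOn f (Ioi a)) :
    ∀ᵐ x ∂volume.restrict (Ioi a), ∫ t in Ioi x, f t = 0 → f x = 0 := by
  set Z := {x | a < x ∧ ∫ t in Ioi x, f t = 0}
  rw [ae_restrict_iff' measurableSet_Ioi]
  rcases Z.eq_empty_or_nonempty with hZ | hZ
  · exact Eventually.of_forall fun x hx hS ↦ (hZ.subset ⟨hx, hS⟩).elim
  have hZbdd : BddBelow Z := ⟨a, fun x hx ↦ hx.1.le⟩
  obtain ⟨u, -, hu, huZ⟩ := exists_seq_tendsto_sInf hZ hZbdd
  have hvanish : ∀ n, ∀ᵐ x ∂volume.restrict (Ioi (u n)), f x = 0 := fun n ↦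
    (integral_eq_zero_iff_of_nonneg hf0 (hf.mono_set (Ioi_subset_Ioi (huZ n).1.le))).1 (huZ n).2
  have hunion := (ae_restrict_iUnion_iff _ _).2 hvanish
  rw [ae_restrict_iff' (MeasurableSet.iUnion fun _ ↦ measurableSet_Ioi)] at hunion
  have hne : ∀ᵐ x, x ≠ sInf Z := by simp [ae_iff, measure_singleton]
  filter_upwards [hunion, hne] with x hx hxne hax hS
  have hlt : sInf Z < x := (csInf_le hZbdd ⟨hax, hS⟩).lt_of_ne' hxne
  obtain ⟨n, hn⟩ := (hu.eventually (gt_mem_nhds hlt)).exists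
  exact hx (mem_iUnion.2 ⟨n, hn⟩)

theorem hazardRate_mul_exp_neg_integral {f : ℝ → ℝ} {a : ℝ} (hf0 : ∀ x, 0 ≤ f x)
    (hf : IntegrableOn f (Ioi a)) :
    ∀ᵐ x ∂volume.restrict (Ioi a),
      hazardRate f x * Real.exp (-∫ t in a..x, hazardRate f t) = f x / ∫ t in Ioi a, f t := by
  filter_upwards [ae_eq_zero_of_integral_Ioi_eq_zero hf0 hf, ae_restrict_mem measurableSet_Ioi]
    with x hx hax
  rcases (setIntegral_nonneg measurableSet_Ioi fun t _ ↦ hf0 t).eq_or_lt with hS | hS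
  · simp [hazardRate, hx hS.symm]
  have hSM : ∫ t in Ioi x, f t ≤ ∫ t in Ioi a, f t :=
    setIntegral_mono_set hf (Eventually.of_forall hf0) (Ioi_subset_Ioi hax.le).eventuallyLE
  rw [integral_hazardRate_eq_log_sub_log hax.le hf0 hf hS, neg_sub, Real.exp_sub,
    Real.exp_log hS, Real.exp_log (hS.trans_le hSM), hazardRate]
  field_simp

theorem integrableOn_exp_neg_mul_mul {f : ℝ → ℝ} {lam : ℝ} (hlam : 0 ≤ lam)
    (hf : IntegrableOn f (Ioi 0)) : IntegrableOn (fun s ↦ Real.exp (-lam * s) * f s) (Ioi 0) := by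
  have hexp : Continuous fun s ↦ Real.exp (-lam * s) := by fun_prop
  refine hf.norm.mono' (hexp.aestronglyMeasurable.mul hf.aestronglyMeasurable)
    ((ae_restrict_iff' measurableSet_Ioi).2 (Eventually.of_forall fun s hs ↦ ?_))
  rw [norm_mul, Real.norm_of_nonneg (Real.exp_nonneg _)]
  exact mul_le_of_le_one_left (norm_nonneg (f s))
    (Real.exp_le_one_iff.2 (by nlinarith [mem_Ioi.1 hs] : -lam * s ≤ 0))

theorem integral_exp_neg_mul_mul_lt {f : ℝ → ℝ} {lam : ℝ} (hlam : 0 < lam) (hf0 : ∀ s, 0 ≤ f s)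
    (hf : IntegrableOn f (Ioi 0)) (hpos : 0 < ∫ s in Ioi 0, f s) :
    ∫ s in Ioi 0, Real.exp (-lam * s) * f s < ∫ s in Ioi 0, f s := by
  have hexp : ∀ s ∈ Ioi (0 : ℝ), Real.exp (-lam * s) < 1 := fun s hs ↦
    Real.exp_lt_one_iff.2 (by nlinarith [mem_Ioi.1 hs])
  have hsupp : Function.support (fun s ↦ f s - Real.exp (-lam * s) * f s) ∩ Ioi 0
      = Function.support f ∩ Ioi 0 := by
    ext s
    simp only [mem_inter_iff, Function.mem_support, and_congr_left_iff]
    intro hs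
    rw [← one_sub_mul, mul_ne_zero_iff, and_iff_right (sub_ne_zero.2 (hexp s hs).ne')]
  have hnonneg : 0 ≤ᵐ[volume.restrict (Ioi 0)] fun s ↦ f s - Real.exp (-lam * s) * f s :=
    (ae_restrict_iff' measurableSet_Ioi).2 (Eventually.of_forall fun s hs ↦ by
      show 0 ≤ f s - _; rw [← one_sub_mul]; exact mul_nonneg (sub_nonneg.2 (hexp s hs).le) (hf0 s))
  have hexpf := integrableOn_exp_neg_mul_mul hlam.le hf
  rw [← sub_pos, ← integral_sub hf hexpf,
    setIntegral_pos_iff_support_of_nonneg_ae hnonneg (hf.sub hexpf), hsupp,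
    ← setIntegral_pos_iff_support_of_nonneg_ae (Eventually.of_forall hf0) hf]
  exact hpos

theorem ae_eq_restrict_Ioi_comp_mul_left {E : Type*} {f g : ℝ → E} {c : ℝ} (hc : 0 < c)
    (hfg : f =ᵐ[volume.restrict (Ioi 0)] g) :
    (fun y ↦ f (c * y)) =ᵐ[volume.restrict (Ioi 0)] fun y ↦ g (c * y) := by
  have hq : Measure.QuasiMeasurePreserving (c * ·) volume volume :=
    ⟨measurable_const_mul c, by
      rw [Real.map_volume_mul_left hc.ne']; exact Measure.smul_absolutelyContinuous⟩
  rw [EventuallyEq, ae_restrict_iff' measurableSet_Ioi] at hfg ⊢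
  filter_upwards [hq.ae hfg] with y hy hy0 using hy (mul_pos hc hy0)

theorem measurable_setLIntegral_Ioc {α : Type*} [MeasurableSpace α] {F : α → ℝ → ℝ≥0∞}
    {a b : α → ℝ} (hF : Measurable (Function.uncurry F)) (ha : Measurable a) (hb : Measurable b) :
    Measurable fun p ↦ ∫⁻ y in Ioc (a p) (b p), F p y := by
  simp_rw [← lintegral_indicator measurableSet_Ioc]
  have hS : MeasurableSet {q : α × ℝ | q.2 ∈ Ioc (a q.1) (b q.1)} :=
    (measurableSet_lt (ha.comp measurable_fst) measurable_snd).inter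
      (measurableSet_le measurable_snd (hb.comp measurable_fst))
  exact (hF.indicator hS).lintegral_prod_right'

theorem lintegral_Ioi_lintegral_Ioc_swap {F : ℝ → ℝ → ℝ≥0∞} (hF : Measurable (Function.uncurry F)) :
    ∫⁻ x in Ioi 0, ∫⁻ y in Ioc 0 x, F x y = ∫⁻ y in Ioi 0, ∫⁻ x in Ici y, F x y := by
  have hind : ∀ x y, (Iic x).indicator (F x) y = (Ici y).indicator (F · y) x := fun x y ↦ by
    simp only [indicator_apply, mem_Iic, mem_Ici]
  calc ∫⁻ x in Ioi 0, ∫⁻ y in Ioc 0 x, F x y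
      = ∫⁻ x in Ioi 0, ∫⁻ y in Ioi 0, (Ici y).indicator (F · y) x := by
        refine lintegral_congr fun x ↦ ?_
        simp_rw [← hind, lintegral_indicator measurableSet_Iic,
          Measure.restrict_restrict measurableSet_Iic, Iic_inter_Ioi]
    _ = ∫⁻ y in Ioi 0, ∫⁻ x in Ioi 0, (Ici y).indicator (F · y) x :=
        lintegral_lintegral_swap (Measurable.ite (measurableSet_le measurable_snd measurable_fst)
          hF measurable_const).aemeasurable
    _ = ∫⁻ y in Ioi 0, ∫⁻ x in Ici y, F x y := by
        refine setLIntegral_congr_fun measurableSet_Ioi fun y hy ↦ ?_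
        rw [lintegral_indicator measurableSet_Ici, Measure.restrict_restrict measurableSet_Ici,
          inter_eq_left.2 (Ici_subset_Ioi.2 hy)]

theorem lintegral_Ici_comp_sub_right (v : ℝ → ℝ≥0∞) (y : ℝ) :
    ∫⁻ x in Ici y, v (x - y) = ∫⁻ z in Ici 0, v z := by
  rw [← lintegral_indicator measurableSet_Ici, ← lintegral_indicator measurableSet_Ici,
    ← lintegral_sub_right_eq_self ((Ici 0).indicator v) y]
  congr with x
  simp only [indicator_apply, mem_Ici, sub_nonneg]

theorem lintegral_Ioi_lintegral_Ioc_mul_sub {u v : ℝ → ℝ≥0∞} (hu : Measurable u)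
    (hv : Measurable v) :
    ∫⁻ x in Ioi 0, ∫⁻ y in Ioc 0 x, u y * v (x - y)
      = (∫⁻ y in Ioi 0, u y) * ∫⁻ z in Ici 0, v z := by
  rw [lintegral_Ioi_lintegral_Ioc_swap (by fun_prop), ← lintegral_mul_const _ hu]
  refine lintegral_congr fun y ↦ ?_
  rw [lintegral_const_mul _ (by fun_prop), lintegral_Ici_comp_sub_right]

theorem lintegral_Ioi_comp_mul_left (u : ℝ → ℝ≥0∞) {c : ℝ} (hc : 0 < c) :
    ∫⁻ y in Ioi 0, u (c * y) = ENNReal.ofReal c⁻¹ * ∫⁻ y in Ioi 0, u y := by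
  rw [← lintegral_indicator measurableSet_Ioi, ← lintegral_indicator measurableSet_Ioi]
  have hind : ∀ y, (Ioi 0).indicator (fun y ↦ u (c * y)) y = (Ioi 0).indicator u (c * y) :=
    fun y ↦ by simp only [indicator_apply, mem_Ioi, mul_pos_iff_of_pos_left hc]
  simp_rw [hind]
  have hmap := lintegral_map_equiv ((Ioi 0).indicator u) (MeasurableEquiv.mulLeft₀ c hc.ne')
    (μ := volume)
  rw [MeasurableEquiv.coe_mulLeft₀, Real.map_volume_mul_left hc.ne', lintegral_smul_measure,
    abs_of_pos (inv_pos.2 hc)] at hmap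
  exact hmap.symm

theorem lintegral_dilation_convolution {c k g h : ℝ → ℝ} (hc : Measurable c) (hc0 : ∀ s, 0 < c s)
    (hk : Measurable k) (hk0 : ∀ s, 0 ≤ k s) (hg : Measurable g) (hg0 : ∀ y, 0 ≤ g y)
    (hh : Measurable h) :
    ∫⁻ x in Ioi 0, ∫⁻ s in Ioi 0, ∫⁻ y in Ioc 0 x,
        ENNReal.ofReal (c s * k s * g (c s * y) * h (x - y))
      = (∫⁻ s in Ioi 0, ENNReal.ofReal (k s)) * (∫⁻ y in Ioi 0, ENNReal.ofReal (g y))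
          * ∫⁻ z in Ici 0, ENNReal.ofReal (h z) := by
  have hsplit : ∀ x s y, ENNReal.ofReal (c s * k s * g (c s * y) * h (x - y))
      = ENNReal.ofReal (c s * k s) * (ENNReal.ofReal (g (c s * y)) * ENNReal.ofReal (h (x - y))) :=
    fun x s y ↦ by
      rw [mul_assoc, ENNReal.ofReal_mul (mul_nonneg (hc0 s).le (hk0 s)),
        ENNReal.ofReal_mul (hg0 _)]
  rw [lintegral_lintegral_swap (measurable_setLIntegral_Ioc (by fun_prop) measurable_const
    measurable_fst).aemeasurable, ← lintegral_mul_const _ (by fun_prop),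
    ← lintegral_mul_const _ (by fun_prop)]
  refine lintegral_congr fun s ↦ ?_
  simp_rw [hsplit]
  rw [lintegral_congr fun x ↦ lintegral_const_mul' _ _ ENNReal.ofReal_ne_top,
    lintegral_const_mul' _ _ ENNReal.ofReal_ne_top,
    lintegral_Ioi_lintegral_Ioc_mul_sub (u := fun y ↦ ENNReal.ofReal (g (c s * y)))
      (v := fun z ↦ ENNReal.ofReal (h z)) (by fun_prop) (by fun_prop),
    lintegral_Ioi_comp_mul_left (fun y ↦ ENNReal.ofReal (g y)) (hc0 s), ← mul_assoc, ← mul_assoc,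
    ← ENNReal.ofReal_mul (mul_nonneg (hc0 s).le (hk0 s)), mul_right_comm (c s),
    mul_inv_cancel₀ (hc0 s).ne', one_mul, mul_right_comm]

theorem integral_integral_toReal {α β : Type*} [MeasurableSpace α] [MeasurableSpace β]
    {μ : Measure α} {ν : Measure β} [SFinite ν] {F : α → β → ℝ≥0∞}
    (hF : Measurable (Function.uncurry F)) (hfin : ∫⁻ x, ∫⁻ y, F x y ∂ν ∂μ ≠ ∞) :
    ∫ x, ∫ y, (F x y).toReal ∂ν ∂μ = (∫⁻ x, ∫⁻ y, F x y ∂ν ∂μ).toReal := by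
  have hm : Measurable fun x ↦ ∫⁻ y, F x y ∂ν := hF.lintegral_prod_right'
  have hlt := ae_lt_top hm hfin
  rw [← integral_toReal hm.aemeasurable hlt]
  refine integral_congr_ae (hlt.mono fun x hx ↦ ?_)
  have hFx : Measurable (F x) := hF.comp measurable_prodMk_left
  exact integral_toReal hFx.aemeasurable (ae_lt_top hFx hx.ne)

theorem integral_dilation_convolution {c k g h : ℝ → ℝ} (hc : Measurable c) (hc0 : ∀ s, 0 < c s)
    (hk : Measurable k) (hk0 : ∀ s, 0 ≤ k s) (hk_int : IntegrableOn k (Ioi 0))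
    (hg : Measurable g) (hg0 : ∀ y, 0 ≤ g y) (hg_int : IntegrableOn g (Ioi 0))
    (hh : Measurable h) (hh0 : ∀ z, 0 ≤ h z) (hh_int : IntegrableOn h (Ioi 0)) :
    ∫ x in Ioi 0, ∫ s in Ioi 0, ∫ y in Ioc 0 x, c s * k s * g (c s * y) * h (x - y)
      = (∫ s in Ioi 0, k s) * (∫ y in Ioi 0, g y) * ∫ z in Ioi 0, h z := by
  have hlint : ∀ {f : ℝ → ℝ}, (∀ x, 0 ≤ f x) → IntegrableOn f (Ioi 0) →
      ∫⁻ x in Ioi 0, ENNReal.ofReal (f x) = ENNReal.ofReal (∫ x in Ioi 0, f x) := fun hf0 hf ↦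
    (ofReal_integral_eq_lintegral_ofReal hf (Eventually.of_forall hf0)).symm
  have hmass := lintegral_dilation_convolution hc hc0 hk hk0 hg hg0 hh
  rw [← Measure.restrict_congr_set Ioi_ae_eq_Ici, hlint hk0 hk_int, hlint hg0 hg_int,
    hlint hh0 hh_int] at hmass
  have hinner : ∀ x s, ∫ y in Ioc 0 x, c s * k s * g (c s * y) * h (x - y)
      = (∫⁻ y in Ioc 0 x, ENNReal.ofReal (c s * k s * g (c s * y) * h (x - y))).toReal :=
    fun x s ↦ integral_eq_lintegral_of_nonneg_ae (Eventually.of_forall fun y ↦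
      mul_nonneg (mul_nonneg (mul_nonneg (hc0 s).le (hk0 s)) (hg0 _)) (hh0 _)) (by fun_prop)
  simp_rw [hinner]
  rw [integral_integral_toReal (measurable_setLIntegral_Ioc (by fun_prop) measurable_const
    measurable_fst) (by simp [hmass, ENNReal.mul_eq_top]), hmass]
  rw [ENNReal.toReal_mul, ENNReal.toReal_mul, ENNReal.toReal_ofReal (integral_nonneg hk0),
    ENNReal.toReal_ofReal (integral_nonneg hg0), ENNReal.toReal_ofReal (integral_nonneg hh0)]

theorem stmt_15_general (γ lam : ℝ) (hlam : 0 < lam)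
    (hT h : ℝ → ℝ) (hTmeas : Measurable hT) (hmeas : Measurable h)
    (hTnn : ∀ s, 0 ≤ hT s) (hnn : ∀ s, 0 ≤ h s)
    (hTprob : ∫ s in Set.Ioi (0 : ℝ), hT s = 1)
    (hprob : ∫ s in Set.Ioi (0 : ℝ), h s = 1)
    (rho : ℝ → ℝ) (hrho : ∀ s, rho s = hT s / ∫ r in Set.Ioi s, hT r) :
    (∀ f : ℝ → ℝ, (∀ x, 0 ≤ f x) → Integrable f (volume.restrict (Set.Ioi (0 : ℝ))) →
      (∫ x in Set.Ioi (0 : ℝ), ∫ s in Set.Ioi (0 : ℝ), ∫ y in Set.Ioc (0 : ℝ) x,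
          rho s * (Real.exp (γ * s - lam * s - ∫ r in Set.Ioc (0 : ℝ) s, rho (s - r))
            * f (Real.exp (γ * s) * y)) * h (x - y))
        = (∫ s in Set.Ioi (0 : ℝ), Real.exp (-lam * s) * hT s) * ∫ x in Set.Ioi (0 : ℝ), f x) ∧
    (∫ s in Set.Ioi (0 : ℝ), Real.exp (-lam * s) * hT s) < 1 := by
  have hTint : IntegrableOn hT (Ioi 0) := Integrable.of_integral_ne_zero (by simp [hTprob])
  have hint : IntegrableOn h (Ioi 0) := Integrable.of_integral_ne_zero (by simp [hprob])
  obtain rfl : rho = hazardRate hT := funext hrho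
  refine ⟨fun f hf0 hf ↦ ?_,
    hTprob ▸ integral_exp_neg_mul_mul_lt hlam hTnn hTint (by simp [hTprob])⟩
  obtain ⟨g, hg, hg0, hfg⟩ := hf.aemeasurable.exists_measurable_nonneg (Eventually.of_forall hf0)
  have hdensity := hazardRate_mul_exp_neg_integral hTnn hTint
  rw [hTprob] at hdensity
  calc _ = ∫ x in Ioi 0, ∫ s in Ioi 0, ∫ y in Ioc 0 x,
        Real.exp (γ * s) * (Real.exp (-lam * s) * hT s) * g (Real.exp (γ * s) * y) * h (x - y) := by
        refine integral_congr_ae (Eventually.of_forall fun x ↦ integral_congr_ae ?_)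
        filter_upwards [hdensity, ae_restrict_mem measurableSet_Ioi] with s hs hs0
        have hJ : ∫ r in Ioc 0 s, hazardRate hT (s - r) = ∫ r in 0..s, hazardRate hT r := by
          rw [← intervalIntegral.integral_of_le hs0.le, intervalIntegral.integral_comp_sub_left,
            sub_self, sub_zero]
        refine integral_congr_ae ?_
        filter_upwards [ae_restrict_of_ae_restrict_of_subset Ioc_subset_Ioi_self
          (ae_eq_restrict_Ioi_comp_mul_left (Real.exp_pos (γ * s)) hfg)] with y hy
        rw [hy, hJ, show γ * s - lam * s - ∫ r in 0..s, hazardRate hT r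
          = γ * s + -lam * s + -∫ r in 0..s, hazardRate hT r by ring, Real.exp_add, Real.exp_add,
          ← div_one (hT s), ← hs]
        ring
    _ = (∫ s in Ioi 0, Real.exp (-lam * s) * hT s) * (∫ y in Ioi 0, g y) * ∫ z in Ioi 0, h z :=
        integral_dilation_convolution (by fun_prop) (fun s ↦ Real.exp_pos _) (by fun_prop)
          (fun s ↦ mul_nonneg (Real.exp_nonneg _) (hTnn s))
          (integrableOn_exp_neg_mul_mul hlam.le hTint) hg hg0 (hf.congr hfg) hmeas hnn hint
    _ = _ := by rw [hprob, mul_one, integral_congr_ae hfg]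

/-- Gene expression with bursting and memory: the composed boundary operator `Ψ Ψ(λ)` on
`L¹(Γ⁻, m⁻) = L¹((0,∞))` has norm `∫_0^∞ e^{-λ s} h_T(s) ds < 1`: on every nonnegative
integrable `f∂` its total mass is multiplied by exactly that Laplace-transform factor. -/
theorem stmt_15 (γ lam : ℝ) (hγ : 0 < γ) (hlam : 0 < lam)
    (hT h : ℝ → ℝ) (hTmeas : Measurable hT) (hmeas : Measurable h)
    (hTnn : ∀ s, 0 ≤ hT s) (hnn : ∀ s, 0 ≤ h s)
    (hTprob : ∫ s in Set.Ioi (0 : ℝ), hT s = 1)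
    (hprob : ∫ s in Set.Ioi (0 : ℝ), h s = 1)
    (rho : ℝ → ℝ) (hrho : ∀ s, rho s = hT s / ∫ r in Set.Ioi s, hT r) :
    (∀ f : ℝ → ℝ, (∀ x, 0 ≤ f x) → Integrable f (volume.restrict (Set.Ioi (0 : ℝ))) →
      (∫ x in Set.Ioi (0 : ℝ), ∫ s in Set.Ioi (0 : ℝ), ∫ y in Set.Ioc (0 : ℝ) x,
          rho s * (Real.exp (γ * s - lam * s - ∫ r in Set.Ioc (0 : ℝ) s, rho (s - r))
            * f (Real.exp (γ * s) * y)) * h (x - y))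
        = (∫ s in Set.Ioi (0 : ℝ), Real.exp (-lam * s) * hT s) * ∫ x in Set.Ioi (0 : ℝ), f x) ∧
    (∫ s in Set.Ioi (0 : ℝ), Real.exp (-lam * s) * hT s) < 1 :=
  stmt_15_general γ lam hlam hT h hTmeas hmeas hTnn hnn hTprob hprob rho hrho
end

section
/- Let G generate a C₀-semigroup {P(t)} of positive contractions on a closed subspace X₀ of an AL space X. Then {P(t)} is stochastic (‖P(t)u‖ = ‖u‖ for all u ∈ X₀ ∩ X₊ and t ≥ 0) if and only if there exists ω ∈ ℝ such that ‖λ R(λ,G) u‖ = ‖u‖ for all u ∈ X₀ ∩ X₊ and all λ > ω. -/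
/-!
On an AL space the norm is additive on the positive cone, so `u ↦ ‖u⁺‖ - ‖u⁻‖` is a continuous
linear functional that agrees with the norm on positive elements. If `P` is stochastic, this
functional sends `λ R(λ,G) u` to `‖u‖`, while contractivity bounds `‖λ R(λ,G) u‖` by `‖u‖`.
Conversely, `‖u‖ = ‖λ R(λ,G) u‖ ≤ λ ∫ e^{-λt} ‖P t u‖ dt ≤ ‖u‖` forces the continuous function
`t ↦ ‖P t u‖ ≤ ‖u‖` to equal `‖u‖` on `(0, ∞)`, hence at every `t ≥ 0` since it is antitone.
-/

open MeasureTheory Filter Topology Set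

section ALSpace

theorem norm_posPart_sub_norm_negPart_add_s19 {E : Type*} [NormedAddCommGroup E] [Lattice E]
    [IsOrderedAddMonoid E] (hadd : ∀ u v : E, 0 ≤ u → 0 ≤ v → ‖u + v‖ = ‖u‖ + ‖v‖) (u v : E) :
    ‖(u + v)⁺‖ - ‖(u + v)⁻‖ = (‖u⁺‖ - ‖u⁻‖) + (‖v⁺‖ - ‖v⁻‖) := by
  have hparts : (u + v)⁺ - (u + v)⁻ = (u⁺ + v⁺) - (u⁻ + v⁻) := by
    rw [posPart_sub_negPart, add_sub_add_comm, posPart_sub_negPart, posPart_sub_negPart]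
  have hnorm := congrArg norm (sub_eq_sub_iff_add_eq_add.mp hparts)
  rw [hadd _ _ (posPart_nonneg _) (add_nonneg (negPart_nonneg _) (negPart_nonneg _)),
    hadd _ _ (negPart_nonneg _) (negPart_nonneg _),
    hadd _ _ (add_nonneg (posPart_nonneg _) (posPart_nonneg _)) (negPart_nonneg _),
    hadd _ _ (posPart_nonneg _) (posPart_nonneg _)] at hnorm
  linarith

variable {E : Type*} [NormedAddCommGroup E] [Lattice E] [IsOrderedAddMonoid E] [HasSolidNorm E]

theorem norm_posPart_add_norm_negPart_s19
    (hadd : ∀ u v : E, 0 ≤ u → 0 ≤ v → ‖u + v‖ = ‖u‖ + ‖v‖) (u : E) :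
    ‖u⁺‖ + ‖u⁻‖ = ‖u‖ := by
  rw [← hadd _ _ (posPart_nonneg u) (negPart_nonneg u), posPart_add_negPart, norm_abs_eq_norm]

theorem exists_continuousLinearMap_eq_norm_of_nonneg [NormedSpace ℝ E]
    (hadd : ∀ u v : E, 0 ≤ u → 0 ≤ v → ‖u + v‖ = ‖u‖ + ‖v‖) :
    ∃ φ : E →L[ℝ] ℝ, (∀ u, 0 ≤ u → φ u = ‖u‖) ∧ ∀ u, φ u ≤ ‖u‖ := by
  let F : E →+ ℝ :=
    AddMonoidHom.mk' (fun u => ‖u⁺‖ - ‖u⁻‖) (norm_posPart_sub_norm_negPart_add_s19 hadd)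
  have hF : ∀ u, |F u| ≤ ‖u‖ := fun u => by
    have := norm_posPart_add_norm_negPart_s19 hadd u
    rw [abs_le]
    constructor <;> simp only [F, AddMonoidHom.mk'_apply] <;>
      linarith [norm_nonneg u⁺, norm_nonneg u⁻]
  refine ⟨F.toRealLinearMap (AddMonoidHomClass.continuous_of_bound F 1 fun u => ?_),
    fun u hu => ?_, fun u => (le_abs_self _).trans (hF u)⟩
  · simpa using hF u
  · simp [F, posPart_eq_self.mpr hu, negPart_eq_zero.mpr hu]

end ALSpace

section Semigroup

variable {X : Type*} [NormedAddCommGroup X] [NormedSpace ℝ X] {P : ℝ → X →L[ℝ] X}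

theorem dist_apply_le_dist_apply_abs_sub
    (hPsem : ∀ s t : ℝ, 0 ≤ s → 0 ≤ t → P (s + t) = (P s).comp (P t))
    (hcontr : ∀ t : ℝ, 0 ≤ t → ‖P t‖ ≤ 1) {s t : ℝ} (hs : 0 ≤ s) (ht : 0 ≤ t) (u : X) :
    dist (P s u) (P t u) ≤ dist (P |s - t| u) u := by
  wlog hts : t ≤ s generalizing s t
  · rw [dist_comm, abs_sub_comm]
    exact this ht hs (le_of_not_ge hts)
  have hsplit : P s = (P t).comp (P (s - t)) := by
    rw [← hPsem t (s - t) ht (sub_nonneg.mpr hts), add_sub_cancel]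
  rw [abs_of_nonneg (sub_nonneg.mpr hts), hsplit, ContinuousLinearMap.comp_apply,
    dist_eq_norm, dist_eq_norm, ← map_sub]
  simpa using (P t).le_of_opNorm_le (hcontr t ht) (P (s - t) u - u)

theorem continuousOn_apply_of_tendsto_nhdsWithin_zero
    (hPsem : ∀ s t : ℝ, 0 ≤ s → 0 ≤ t → P (s + t) = (P s).comp (P t))
    (hcontr : ∀ t : ℝ, 0 ≤ t → ‖P t‖ ≤ 1) {u : X}
    (hu : Tendsto (fun t : ℝ => P t u) (𝓝[≥] 0) (𝓝 u)) :
    ContinuousOn (fun t => P t u) (Ici 0) := by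
  intro t ht
  have habs : Tendsto (fun s => |s - t|) (𝓝[Ici 0] t) (𝓝[≥] 0) := by
    refine tendsto_nhdsWithin_of_tendsto_nhds_of_eventually_within _ ?_
      (Eventually.of_forall fun _ => mem_Ici.mpr (abs_nonneg _))
    have := ((continuous_id.sub (continuous_const (y := t))).abs.tendsto t).mono_left
      (nhdsWithin_le_nhds (s := Ici 0))
    simpa using this
  rw [ContinuousWithinAt, tendsto_iff_dist_tendsto_zero]
  refine squeeze_zero' (Eventually.of_forall fun _ => dist_nonneg) ?_
    ((tendsto_iff_dist_tendsto_zero.mp hu).comp habs)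
  filter_upwards [self_mem_nhdsWithin] with s hs
  exact dist_apply_le_dist_apply_abs_sub hPsem hcontr hs ht u

theorem antitoneOn_norm_apply
    (hPsem : ∀ s t : ℝ, 0 ≤ s → 0 ≤ t → P (s + t) = (P s).comp (P t))
    (hcontr : ∀ t : ℝ, 0 ≤ t → ‖P t‖ ≤ 1) (u : X) :
    AntitoneOn (fun t => ‖P t u‖) (Ici 0) := by
  intro t ht s _ hts
  show ‖P s u‖ ≤ ‖P t u‖
  have hsplit : P s = (P (s - t)).comp (P t) := by
    rw [← hPsem (s - t) t (sub_nonneg.mpr hts) ht, sub_add_cancel]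
  rw [hsplit]
  simpa using (P (s - t)).le_of_opNorm_le (hcontr _ (sub_nonneg.mpr hts)) (P t u)

end Semigroup

section Laplace

variable {X : Type*} [NormedAddCommGroup X] [NormedSpace ℝ X] {f : ℝ → X} {lam C : ℝ}

theorem integral_exp_neg_mul_Ioi_zero (hlam : 0 < lam) :
    ∫ t in Ioi (0 : ℝ), Real.exp (-lam * t) = lam⁻¹ := by
  rw [integral_exp_mul_Ioi (neg_lt_zero.mpr hlam)]
  simp [neg_div]

theorem integrableOn_exp_neg_mul_smul (hlam : 0 < lam) (hf : ContinuousOn f (Ioi 0))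
    (hC : ∀ t ∈ Ioi (0 : ℝ), ‖f t‖ ≤ C) :
    IntegrableOn (fun t => Real.exp (-lam * t) • f t) (Ioi 0) := by
  refine Integrable.mono' ((exp_neg_integrableOn_Ioi 0 hlam).mul_const C)
    (((Real.continuous_exp.comp (continuous_const.mul continuous_id)).continuousOn.smul
      hf).aestronglyMeasurable measurableSet_Ioi) ?_
  filter_upwards [ae_restrict_mem measurableSet_Ioi] with t ht
  rw [norm_smul, Real.norm_of_nonneg (Real.exp_pos _).le]
  exact mul_le_mul_of_nonneg_left (hC t ht) (Real.exp_pos _).le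

theorem norm_smul_integral_exp_neg_mul_smul_le (hlam : 0 < lam)
    (hC : ∀ t ∈ Ioi (0 : ℝ), ‖f t‖ ≤ C) :
    ‖lam • ∫ t in Ioi (0 : ℝ), Real.exp (-lam * t) • f t‖ ≤ C := by
  have hint : ‖∫ t in Ioi (0 : ℝ), Real.exp (-lam * t) • f t‖ ≤ lam⁻¹ * C := by
    rw [← integral_exp_neg_mul_Ioi_zero hlam, ← integral_mul_const]
    refine norm_integral_le_of_norm_le ((exp_neg_integrableOn_Ioi 0 hlam).mul_const C) ?_
    filter_upwards [ae_restrict_mem measurableSet_Ioi] with t ht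
    rw [norm_smul, Real.norm_of_nonneg (Real.exp_pos _).le]
    exact mul_le_mul_of_nonneg_left (hC t ht) (Real.exp_pos _).le
  rw [norm_smul, Real.norm_of_nonneg hlam.le]
  calc lam * _ ≤ lam * (lam⁻¹ * C) := mul_le_mul_of_nonneg_left hint hlam.le
    _ = C := by field_simp

theorem norm_smul_integral_exp_neg_mul_smul_le_mul_integral (hlam : 0 ≤ lam) :
    ‖lam • ∫ t in Ioi (0 : ℝ), Real.exp (-lam * t) • f t‖ ≤
      lam * ∫ t in Ioi (0 : ℝ), Real.exp (-lam * t) * ‖f t‖ := by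
  rw [norm_smul, Real.norm_of_nonneg hlam]
  refine mul_le_mul_of_nonneg_left ((norm_integral_le_integral_norm _).trans_eq ?_) hlam
  simp_rw [norm_smul, Real.norm_of_nonneg (Real.exp_pos _).le]

theorem eqOn_Ioi_of_le_mul_integral_exp_neg_mul {g : ℝ → ℝ} {c : ℝ} (hlam : 0 < lam)
    (hg : ContinuousOn g (Ioi 0)) (hgc : ∀ t ∈ Ioi (0 : ℝ), ‖g t‖ ≤ c)
    (hc : c ≤ lam * ∫ t in Ioi (0 : ℝ), Real.exp (-lam * t) * g t) :
    EqOn g (fun _ => c) (Ioi 0) := by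
  have hexp : Continuous fun t : ℝ => Real.exp (-lam * t) := by fun_prop
  have hgi : IntegrableOn (fun t => Real.exp (-lam * t) * g t) (Ioi 0) :=
    integrableOn_exp_neg_mul_smul hlam hg hgc
  have hci : IntegrableOn (fun t => Real.exp (-lam * t) * c) (Ioi 0) :=
    (exp_neg_integrableOn_Ioi 0 hlam).mul_const c
  have hle : (fun t => Real.exp (-lam * t) * g t) ≤ᵐ[volume.restrict (Ioi 0)]
      fun t => Real.exp (-lam * t) * c := by
    filter_upwards [ae_restrict_mem measurableSet_Ioi] with t ht
    exact mul_le_mul_of_nonneg_left ((le_abs_self _).trans (hgc t ht)) (Real.exp_pos _).le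
  have heq : ∫ t in Ioi (0 : ℝ), Real.exp (-lam * t) * g t =
      ∫ t in Ioi (0 : ℝ), Real.exp (-lam * t) * c := by
    refine le_antisymm (integral_mono_ae hgi hci hle) ?_
    rw [integral_mul_const, integral_exp_neg_mul_Ioi_zero hlam]
    calc lam⁻¹ * c ≤ lam⁻¹ * (lam * _) := mul_le_mul_of_nonneg_left hc (inv_nonneg.mpr hlam.le)
      _ = _ := by field_simp
  intro t ht
  have := Measure.eqOn_open_of_ae_eq ((integral_eq_iff_of_ae_le hgi hci hle).mp heq) isOpen_Ioi
    (hexp.continuousOn.mul hg) (hexp.mul continuous_const).continuousOn ht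
  exact mul_left_cancel₀ (Real.exp_pos _).ne' this

theorem norm_smul_integral_exp_neg_mul_smul_eq [Lattice X] [IsOrderedAddMonoid X]
    [HasSolidNorm X] [CompleteSpace X]
    (hadd : ∀ u v : X, 0 ≤ u → 0 ≤ v → ‖u + v‖ = ‖u‖ + ‖v‖) (hlam : 0 < lam)
    (hf : ContinuousOn f (Ioi 0)) (hf0 : ∀ t ∈ Ioi (0 : ℝ), 0 ≤ f t)
    (hfC : ∀ t ∈ Ioi (0 : ℝ), ‖f t‖ = C) :
    ‖lam • ∫ t in Ioi (0 : ℝ), Real.exp (-lam * t) • f t‖ = C := by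
  obtain ⟨φ, hφ_nonneg, hφ_le⟩ := exists_continuousLinearMap_eq_norm_of_nonneg hadd
  have hφ : φ (lam • ∫ t in Ioi (0 : ℝ), Real.exp (-lam * t) • f t) = C := by
    have hconst : ∀ t ∈ Ioi (0 : ℝ), φ (Real.exp (-lam * t) • f t) = Real.exp (-lam * t) * C :=
      fun t ht => by rw [map_smul, smul_eq_mul, hφ_nonneg _ (hf0 t ht), hfC t ht]
    rw [map_smul, ← φ.integral_comp_comm
      (integrableOn_exp_neg_mul_smul hlam hf fun t ht => (hfC t ht).le),
      setIntegral_congr_fun measurableSet_Ioi hconst, integral_mul_const,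
      integral_exp_neg_mul_Ioi_zero hlam, smul_eq_mul]
    field_simp
  exact le_antisymm (norm_smul_integral_exp_neg_mul_smul_le hlam fun t ht => (hfC t ht).le)
    (hφ ▸ hφ_le _)

end Laplace

theorem stmt_19_general {X₀ : Type*} [NormedAddCommGroup X₀] [Lattice X₀] [IsOrderedAddMonoid X₀]
    [HasSolidNorm X₀] [NormedSpace ℝ X₀]
    [CompleteSpace X₀]
    (hadd : ∀ u v : X₀, 0 ≤ u → 0 ≤ v → ‖u + v‖ = ‖u‖ + ‖v‖)
    (P : ℝ → X₀ →L[ℝ] X₀)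
    (hPsem : ∀ s t : ℝ, 0 ≤ s → 0 ≤ t → P (s + t) = (P s).comp (P t))
    (hstrong : ∀ u : X₀, Tendsto (fun t : ℝ => P t u) (𝓝[≥] (0 : ℝ)) (𝓝 u))
    (hpos : ∀ t : ℝ, 0 ≤ t → ∀ u : X₀, 0 ≤ u → 0 ≤ P t u)
    (hcontr : ∀ t : ℝ, 0 ≤ t → ‖P t‖ ≤ 1) :
    (∀ t : ℝ, 0 ≤ t → ∀ u : X₀, 0 ≤ u → ‖P t u‖ = ‖u‖) ↔
    (∃ ω : ℝ, ∀ lam : ℝ, ω < lam → ∀ u : X₀, 0 ≤ u →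
      ‖lam • ∫ t in Set.Ioi (0 : ℝ), Real.exp (-lam * t) • P t u‖ = ‖u‖) := by
  have hcont : ∀ u, ContinuousOn (fun t => P t u) (Ioi 0) := fun u =>
    (continuousOn_apply_of_tendsto_nhdsWithin_zero hPsem hcontr (hstrong u)).mono
      Ioi_subset_Ici_self
  have hle : ∀ t : ℝ, 0 ≤ t → ∀ u, ‖P t u‖ ≤ ‖u‖ := fun t ht u => by
    simpa using (P t).le_of_opNorm_le (hcontr t ht) u
  constructor
  · intro hstoch
    exact ⟨0, fun lam hlam u hu => norm_smul_integral_exp_neg_mul_smul_eq hadd hlam (hcont u)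
      (fun t ht => hpos t (le_of_lt ht) u hu) fun t ht => hstoch t (le_of_lt ht) u hu⟩
  · rintro ⟨ω, hres⟩ t ht u hu
    have hlam : 0 < max ω 0 + 1 := by positivity
    have hconst : EqOn (fun t => ‖P t u‖) (fun _ => ‖u‖) (Ioi 0) :=
      eqOn_Ioi_of_le_mul_integral_exp_neg_mul hlam (hcont u).norm
        (fun s hs => (norm_norm (P s u)).trans_le (hle s (le_of_lt hs) u))
        ((hres _ (by linarith [le_max_left ω 0]) u hu).symm.trans_le
          (norm_smul_integral_exp_neg_mul_smul_le_mul_integral hlam.le))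
    refine le_antisymm (hle t ht u) ?_
    calc ‖u‖ = ‖P (t + 1) u‖ := (hconst (show (0 : ℝ) < t + 1 by linarith)).symm
      _ ≤ ‖P t u‖ := antitoneOn_norm_apply hPsem hcontr u ht
        (show (0 : ℝ) ≤ t + 1 by linarith) (by linarith)

/-- A `C₀`-semigroup of positive contractions on a (closed subspace which is an) AL space is
stochastic iff for some `ω` the scaled resolvents `λ R(λ,G) = λ ∫_0^∞ e^{-λ t} P(t) dt` are
norm-preserving on the positive cone for all `λ > ω`. -/
theorem stmt_19 {X₀ : Type*} [NormedAddCommGroup X₀] [Lattice X₀] [IsOrderedAddMonoid X₀]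
    [HasSolidNorm X₀] [NormedSpace ℝ X₀]
    [CompleteSpace X₀]
    (hadd : ∀ u v : X₀, 0 ≤ u → 0 ≤ v → ‖u + v‖ = ‖u‖ + ‖v‖)
    (P : ℝ → X₀ →L[ℝ] X₀)
    (hP0 : P 0 = 1)
    (hPsem : ∀ s t : ℝ, 0 ≤ s → 0 ≤ t → P (s + t) = (P s).comp (P t))
    (hstrong : ∀ u : X₀, Tendsto (fun t : ℝ => P t u) (𝓝[≥] (0 : ℝ)) (𝓝 u))
    (hpos : ∀ t : ℝ, 0 ≤ t → ∀ u : X₀, 0 ≤ u → 0 ≤ P t u)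
    (hcontr : ∀ t : ℝ, 0 ≤ t → ‖P t‖ ≤ 1) :
    (∀ t : ℝ, 0 ≤ t → ∀ u : X₀, 0 ≤ u → ‖P t u‖ = ‖u‖) ↔
    (∃ ω : ℝ, ∀ lam : ℝ, ω < lam → ∀ u : X₀, 0 ≤ u →
      ‖lam • ∫ t in Set.Ioi (0 : ℝ), Real.exp (-lam * t) • P t u‖ = ‖u‖) :=
  stmt_19_general hadd P hPsem hstrong hpos hcontr
end
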